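/- arXiv:2003.12408 — 3 statements merged into one kernel-verified Lean document; each statement's English description precedes it below -/
import Mathlib

section
/- Identification without surrogates on the unlabelled data (Settings I and II). Under Assumptions 1, 2 and 3, suppose Y(0), Y(1) ∈ L¹(P) and let ν : {0,1}×𝒳×𝒮 → ℝ be measurable with ν(T,X,S) = E[Y | σ(T,X,S,R)] a.s. on {R=1}. Then for each t ∈ {0,1}: (a) E[Y(t)] = E[h_t(X)] for any measurable h_t : 𝒳 → ℝ with h_t(X) = E[ν(T,X,S) | σ(T,X,R)] a.s. on the event {T=t, R=1}; and (b) E[Y(t)] = E[m_t(X)] for any measurable m_t : 𝒳 → ℝ with m_t(X) = E[Y | σ(T,X,R)] a.s. on the event {T=t, R=1}. -/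
open MeasureTheory ProbabilityTheory Filter
open scoped ENNReal NNReal Topology

noncomputable section

namespace Surrogate

variable {Ω 𝒳 𝒮 : Type*} [MeasurableSpace Ω] [MeasurableSpace 𝒳] [MeasurableSpace 𝒮]

/-- Potential value indexed by `t ∈ {0,1}` (encoded as a real number). -/
def pot {α : Type*} (a0 a1 : Ω → α) (t : ℝ) : Ω → α := if t = 1 then a1 else a0

/-- Observed value `a(T)`. -/
def obs {α : Type*} (T : Ω → ℝ) (a0 a1 : Ω → α) : Ω → α := fun ω => if T ω = 1 then a1 ω else a0 ω

/-- σ-algebra generated by one random variable. -/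
def mX (X : Ω → 𝒳) : MeasurableSpace Ω := MeasurableSpace.comap X inferInstance

/-- σ-algebra generated by a pair of random variables. -/
def m2 {α β : Type*} [MeasurableSpace α] [MeasurableSpace β] (U : Ω → α) (V : Ω → β) :
    MeasurableSpace Ω := MeasurableSpace.comap (fun ω => (U ω, V ω)) inferInstance

/-- σ-algebra generated by a triple of random variables. -/
def m3 {α β γ : Type*} [MeasurableSpace α] [MeasurableSpace β] [MeasurableSpace γ]
    (U : Ω → α) (V : Ω → β) (W : Ω → γ) : MeasurableSpace Ω :=
  MeasurableSpace.comap (fun ω => (U ω, V ω, W ω)) inferInstance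

/-- σ-algebra generated by four random variables. -/
def m4 {α β γ δ : Type*} [MeasurableSpace α] [MeasurableSpace β] [MeasurableSpace γ]
    [MeasurableSpace δ] (U : Ω → α) (V : Ω → β) (W : Ω → γ) (Z : Ω → δ) : MeasurableSpace Ω :=
  MeasurableSpace.comap (fun ω => (U ω, V ω, W ω, Z ω)) inferInstance

/-- A real-valued function is bounded. -/
def Bdd {α : Type*} (f : α → ℝ) : Prop := ∃ C, ∀ a, |f a| ≤ C

/-- Conditional independence of two random variables given a sub-σ-algebra, phrased through
bounded measurable test functions. -/
def CondIndepBdd (P : Measure Ω) (m : MeasurableSpace Ω) {α β : Type*}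
    [MeasurableSpace α] [MeasurableSpace β] (U : Ω → α) (V : Ω → β) : Prop :=
  ∀ f : α → ℝ, Measurable f → Bdd f → ∀ g : β → ℝ, Measurable g → Bdd g →
    P[fun ω => f (U ω) * g (V ω)|m]
      =ᵐ[P] fun ω => (P[fun ω' => f (U ω')|m]) ω * (P[fun ω' => g (V ω')|m]) ω

/-- Variance `E[Z²] − (E[Z])²`. -/
def Var (P : Measure Ω) (Z : Ω → ℝ) : ℝ := (∫ ω, (Z ω) ^ 2 ∂P) - (∫ ω, Z ω ∂P) ^ 2

/-- Conditional variance `E[Z²|m] − (E[Z|m])²`. -/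
def condVar (P : Measure Ω) (m : MeasurableSpace Ω) (Z : Ω → ℝ) : Ω → ℝ :=
  fun ω => (P[fun ω' => (Z ω') ^ 2|m]) ω - ((P[Z|m]) ω) ^ 2

/-- The efficient influence function ψ* of Theorem 1 (labeling propensity depending on
`(t,x,s)`), centered at `d`. -/
def psiStar (X : Ω → 𝒳) (T R : Ω → ℝ) (S : Ω → 𝒮) (Y : Ω → ℝ) (e : 𝒳 → ℝ)
    (r : ℝ → 𝒳 → 𝒮 → ℝ) (mt : ℝ → 𝒳 → 𝒮 → ℝ) (mu : ℝ → 𝒳 → ℝ) (d : ℝ) : Ω → ℝ :=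
  fun ω =>
    mu 1 (X ω) - mu 0 (X ω)
      + T ω * R ω / (e (X ω) * r 1 (X ω) (S ω)) * (Y ω - mt 1 (X ω) (S ω))
      - (1 - T ω) * R ω / ((1 - e (X ω)) * r 0 (X ω) (S ω)) * (Y ω - mt 0 (X ω) (S ω))
      + T ω / e (X ω) * (mt 1 (X ω) (S ω) - mu 1 (X ω))
      - (1 - T ω) / (1 - e (X ω)) * (mt 0 (X ω) (S ω) - mu 0 (X ω))
      - d

/-- The influence function ψ_I of Settings I and II (no surrogates), centered at `d`. -/
def psiI (X : Ω → 𝒳) (T R Y : Ω → ℝ) (e : 𝒳 → ℝ) (r2 : ℝ → 𝒳 → ℝ) (mu : ℝ → 𝒳 → ℝ)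
    (d : ℝ) : Ω → ℝ :=
  fun ω =>
    mu 1 (X ω) - mu 0 (X ω)
      + T ω * R ω / (e (X ω) * r2 1 (X ω)) * (Y ω - mu 1 (X ω))
      - (1 - T ω) * R ω / ((1 - e (X ω)) * r2 0 (X ω)) * (Y ω - mu 0 (X ω))
      - d

/-- The influence function ψ_III of Setting III (labeling propensity depending on `(t,x)`),
centered at `d`. -/
def psiIII (X : Ω → 𝒳) (T R : Ω → ℝ) (S : Ω → 𝒮) (Y : Ω → ℝ) (e : 𝒳 → ℝ)
    (r2 : ℝ → 𝒳 → ℝ) (mt : ℝ → 𝒳 → 𝒮 → ℝ) (mu : ℝ → 𝒳 → ℝ) (d : ℝ) : Ω → ℝ :=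
  fun ω =>
    mu 1 (X ω) - mu 0 (X ω)
      + T ω * R ω / (e (X ω) * r2 1 (X ω)) * (Y ω - mt 1 (X ω) (S ω))
      - (1 - T ω) * R ω / ((1 - e (X ω)) * r2 0 (X ω)) * (Y ω - mt 0 (X ω) (S ω))
      + T ω / e (X ω) * (mt 1 (X ω) (S ω) - mu 1 (X ω))
      - (1 - T ω) / (1 - e (X ω)) * (mt 0 (X ω) (S ω) - mu 0 (X ω))
      - d

/-- The influence function ψ_IV of Setting IV (fully observed outcomes), centered at `d`. -/
def psiIV (X : Ω → 𝒳) (T Y : Ω → ℝ) (e : 𝒳 → ℝ) (mu : ℝ → 𝒳 → ℝ) (d : ℝ) : Ω → ℝ :=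
  fun ω =>
    mu 1 (X ω) - mu 0 (X ω)
      + T ω / e (X ω) * (Y ω - mu 1 (X ω))
      - (1 - T ω) / (1 - e (X ω)) * (Y ω - mu 0 (X ω))
      - d

/-- The influence formula ψ evaluated on a data tuple `w = (x, t, s, r, y)` with nuisances
`(e, r, μ̃, μ)`, centered at `d`. -/
def psiData {𝒳' 𝒮' : Type*} (w : 𝒳' × ℝ × 𝒮' × ℝ × ℝ) (e : 𝒳' → ℝ) (r : ℝ → 𝒳' → 𝒮' → ℝ)
    (mt : ℝ → 𝒳' → 𝒮' → ℝ) (mu : ℝ → 𝒳' → ℝ) (d : ℝ) : ℝ :=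
  mu 1 w.1 - mu 0 w.1
    + w.2.1 * w.2.2.2.1 / (e w.1 * r 1 w.1 w.2.2.1) * (w.2.2.2.2 - mt 1 w.1 w.2.2.1)
    - (1 - w.2.1) * w.2.2.2.1 / ((1 - e w.1) * r 0 w.1 w.2.2.1) * (w.2.2.2.2 - mt 0 w.1 w.2.2.1)
    + w.2.1 / e w.1 * (mt 1 w.1 w.2.2.1 - mu 1 w.1)
    - (1 - w.2.1) / (1 - e w.1) * (mt 0 w.1 w.2.2.1 - mu 0 w.1)
    - d

end Surrogate

open Surrogate

/-!
Write `W = 1{T = t} R` for the indicator of "treated with `t` and labelled" and `q = E[W | X]`;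
overlap in both propensities gives `q ≥ ε² > 0`. The heart of the argument is the factorisation
`E[W Y(t) | X] = q E[Y(t) | X]`. On `{T = t}`, missingness at random (Assumption 1(ii)) factors
`E[R g(Y(t)) | X, T, S(t)]`, and by Assumption 3 the labelling propensity `E[R | X, T, S(t)]` is
`E[R | T, X]`; so `E[W g(Y(t)) | T, X] = E[W | T, X] E[g(Y(t)) | T, X]`, and by unconfoundedness
(Assumption 1(i)) the last factor is `E[g(Y(t)) | X]`. This holds for bounded `g` and passes to
`Y(t)` by truncation.

If `H(X)` agrees with `E[Z | T, X, R]` on `{W ≠ 0}`, then `H(X) q = E[W Z | X]`. For `Z = Y` this is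
`q E[Y(t) | X]`, so `H(X) = E[Y(t) | X]` and `E[H(X)] = E[Y(t)]`. For `Z = ν(T, X, S)` the tower
property through `σ(T, X, S, R)` gives `E[W Z | X] = E[W Y | X]`; here `ν(T, X, S)` is integrable
because the labelling propensity given `(T, X, S)` is at least `ε`.
-/

open Set

lemma isPiSystem_image2_inter {Ω : Type*} (m₁ m₂ : MeasurableSpace Ω) :
    IsPiSystem (image2 (· ∩ ·) {s | MeasurableSet[m₁] s} {s | MeasurableSet[m₂] s}) := by
  rintro _ ⟨a, ha, b, hb, rfl⟩ _ ⟨c, hc, d, hd, rfl⟩ -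
  exact ⟨a ∩ c, ha.inter hc, b ∩ d, hb.inter hd, inter_inter_inter_comm a c b d⟩

lemma generateFrom_image2_inter {Ω : Type*} (m₁ m₂ : MeasurableSpace Ω) :
    MeasurableSpace.generateFrom (image2 (· ∩ ·) {s | MeasurableSet[m₁] s}
      {s | MeasurableSet[m₂] s}) = m₁ ⊔ m₂ := by
  refine le_antisymm (MeasurableSpace.generateFrom_le ?_) (sup_le ?_ ?_)
  · rintro _ ⟨a, ha, b, hb, rfl⟩
    exact (le_sup_left (b := m₂) a ha).inter (le_sup_right (a := m₁) b hb)
  · exact fun a ha => MeasurableSpace.measurableSet_generateFrom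
      ⟨a, ha, univ, MeasurableSet.univ, inter_univ a⟩
  · exact fun b hb => MeasurableSpace.measurableSet_generateFrom
      ⟨univ, MeasurableSet.univ, b, hb, univ_inter b⟩

section CondExp

variable {Ω : Type*} {m m' : MeasurableSpace Ω} [mΩ : MeasurableSpace Ω] {P : Measure Ω}
  [IsFiniteMeasure P]

theorem condExp_sup_comap_eq_of_condIndep {β : Type*} [mβ : MeasurableSpace β]
    (hm : m ≤ mΩ) {V : Ω → β} (hV : Measurable V) {Z : Ω → ℝ} (hZ : Integrable Z P)
    (hZV : ∀ C, MeasurableSet C →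
      P[Z * (V ⁻¹' C).indicator 1|m] =ᵐ[P] P[Z|m] * P[(V ⁻¹' C).indicator 1|m]) :
    P[Z|m ⊔ mβ.comap V] =ᵐ[P] P[Z|m] := by
  have hle : m ⊔ mβ.comap V ≤ mΩ := sup_le hm hV.comap_le
  have hmeas : StronglyMeasurable[m ⊔ mβ.comap V] P[Z|m] :=
    stronglyMeasurable_condExp.mono le_sup_left
  suffices h : ∀ s, MeasurableSet[m ⊔ mβ.comap V] s →
      ∫ ω in s, (P[Z|m]) ω ∂P = ∫ ω in s, Z ω ∂P from
    (ae_eq_condExp_of_forall_setIntegral_eq hle hZ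
      (fun _ _ _ => integrable_condExp.integrableOn) (fun s hs _ => h s hs)
      hmeas.aestronglyMeasurable).symm
  intro s hs
  induction s, hs using MeasurableSpace.induction_on_inter
    (generateFrom_image2_inter m _).symm (isPiSystem_image2_inter _ _) with
  | empty => simp
  | basic s hs =>
    obtain ⟨A, hA, _, ⟨C, hC, rfl⟩, rfl⟩ := hs
    have hVC : MeasurableSet (V ⁻¹' C) := hV hC
    have hind : ∀ f : Ω → ℝ, f * (V ⁻¹' C).indicator 1 = (V ⁻¹' C).indicator f := by
      intro f; ext ω; by_cases h : ω ∈ V ⁻¹' C <;> simp [h]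
    have hmulInt : ∀ f : Ω → ℝ, Integrable f P → Integrable (f * (V ⁻¹' C).indicator 1) P :=
      fun f hf => by rw [hind]; exact hf.indicator hVC
    have hpull : P[P[Z|m] * (V ⁻¹' C).indicator 1|m]
        =ᵐ[P] P[Z|m] * P[(V ⁻¹' C).indicator 1|m] :=
      condExp_mul_of_stronglyMeasurable_left stronglyMeasurable_condExp
        (hmulInt _ integrable_condExp) ((integrable_const 1).indicator hVC)
    calc ∫ ω in A ∩ V ⁻¹' C, (P[Z|m]) ω ∂P
        = ∫ ω in A, (P[P[Z|m] * (V ⁻¹' C).indicator 1|m]) ω ∂P := by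
          rw [setIntegral_condExp hm (hmulInt _ integrable_condExp) hA, hind,
            setIntegral_indicator hVC]
      _ = ∫ ω in A, (P[Z * (V ⁻¹' C).indicator 1|m]) ω ∂P :=
          setIntegral_congr_ae (hm A hA) ((hpull.trans (hZV C hC).symm).mono fun _ h _ => h)
      _ = ∫ ω in A ∩ V ⁻¹' C, Z ω ∂P := by
          rw [setIntegral_condExp hm (hmulInt _ hZ) hA, hind, setIntegral_indicator hVC]
  | compl s hs ih =>
    rw [setIntegral_compl (hle s hs) integrable_condExp, setIntegral_compl (hle s hs) hZ, ih,
      integral_condExp hm]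
  | iUnion f hdisj hf ih =>
    rw [integral_iUnion (fun n => hle _ (hf n)) hdisj integrable_condExp.integrableOn,
      integral_iUnion (fun n => hle _ (hf n)) hdisj hZ.integrableOn]
    exact tsum_congr ih

theorem condExp_mul_ae_eq_of_forall_bdd {U V Y : Ω → ℝ}
    (hU : AEStronglyMeasurable U P) (hV : AEStronglyMeasurable V P) {c : ℝ}
    (hUc : ∀ᵐ ω ∂P, |U ω| ≤ c) (hVc : ∀ᵐ ω ∂P, |V ω| ≤ c) (hY : Integrable Y P)
    (h : ∀ g : ℝ → ℝ, Measurable g → Bdd g →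
      P[fun ω => U ω * g (Y ω)|m] =ᵐ[P] P[fun ω => V ω * g (Y ω)|m]) :
    P[U * Y|m] =ᵐ[P] P[V * Y|m] := by
  have hint : ∀ W : Ω → ℝ, AEStronglyMeasurable W P → (∀ᵐ ω ∂P, |W ω| ≤ c) →
      ∀ n : ℕ, Integrable (W * truncation Y n) P := fun W hW hWc n =>
    (hY.1.integrable_truncation.bdd_mul hW (hWc.mono fun ω h => h) :)
  have hlim : ∀ W : Ω → ℝ, ∀ ω,
      Tendsto (fun n : ℕ => (W * truncation Y n) ω) atTop (𝓝 ((W * Y) ω)) := fun W ω =>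
    tendsto_const_nhds.congr' <| (eventually_gt_atTop ⌊|Y ω|⌋₊).mono fun n hn => by
      simp only [Pi.mul_apply, truncation_eq_self (Nat.lt_of_floor_lt hn)]
  have hbound : ∀ W : Ω → ℝ, (∀ᵐ ω ∂P, |W ω| ≤ c) →
      ∀ n : ℕ, ∀ᵐ ω ∂P, ‖(W * truncation Y n) ω‖ ≤ c * |Y ω| := fun W hWc n =>
    hWc.mono fun ω h => by
      rw [Pi.mul_apply, Real.norm_eq_abs, abs_mul]
      exact mul_le_mul h (abs_truncation_le_abs_self Y n ω) (abs_nonneg _)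
        ((abs_nonneg _).trans h)
  exact tendsto_condExp_unique _ _ _ _ (hint U hU hUc) (hint V hV hVc)
    (.of_forall (hlim U)) (.of_forall (hlim V)) _ (hY.abs.const_mul c) _ (hY.abs.const_mul c)
    (hbound U hUc) (hbound V hVc) fun n =>
      h _ (measurable_id.indicator measurableSet_Ioc) ⟨|(n : ℝ)|, abs_truncation_le_bound id n⟩

lemma mul_ae_eq_condExp_mul (hm' : m' ≤ mΩ) {W N Z : Ω → ℝ}
    (hW : StronglyMeasurable[m'] W) {c : ℝ} (hWc : ∀ ω, |W ω| ≤ c) (hZ : Integrable Z P)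
    (hN : ∀ᵐ ω ∂P, W ω ≠ 0 → N ω = P[Z|m'] ω) :
    W * N =ᵐ[P] P[W * Z|m'] := by
  refine EventuallyEq.trans ?_
    (condExp_stronglyMeasurable_mul_of_bound hm' hW hZ c (.of_forall hWc)).symm
  filter_upwards [hN] with ω hω
  by_cases h0 : W ω = 0
  · simp [h0]
  · simp [hω h0]

theorem integral_eq_of_ae_eq_condExp_of_ne_zero (hm : m ≤ m') (hm' : m' ≤ mΩ)
    {W Z H Y : Ω → ℝ} (hW : StronglyMeasurable[m'] W) {c : ℝ}
    (hWc : ∀ ω, |W ω| ≤ c) (hZ : Integrable Z P) (hH : StronglyMeasurable[m] H)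
    (hHZ : ∀ᵐ ω ∂P, W ω ≠ 0 → H ω = P[Z|m'] ω) (hWm : ∀ᵐ ω ∂P, P[W|m] ω ≠ 0)
    (hWZ : P[W * Z|m] =ᵐ[P] P[W|m] * P[Y|m]) :
    ∫ ω, H ω ∂P = ∫ ω, Y ω ∂P := by
  have hWH : W * H =ᵐ[P] P[W * Z|m'] := mul_ae_eq_condExp_mul hm' hW hWc hZ hHZ
  have hWint : Integrable W P :=
    .of_bound (hW.mono hm').aestronglyMeasurable c (.of_forall hWc)
  have hpull : P[H * W|m] =ᵐ[P] H * P[W|m] := condExp_mul_of_stronglyMeasurable_left hH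
    (by rw [mul_comm]; exact integrable_condExp.congr hWH.symm) hWint
  have htower : P[W * H|m] =ᵐ[P] P[W * Z|m] :=
    (condExp_congr_ae hWH).trans (condExp_condExp_of_le hm hm')
  have hHY : H =ᵐ[P] P[Y|m] := by
    rw [mul_comm H W] at hpull
    filter_upwards [hpull.symm.trans (htower.trans hWZ), hWm] with ω h hω
    simp only [Pi.mul_apply] at h
    exact mul_right_cancel₀ hω (h.trans (mul_comm _ _))
  rw [integral_congr_ae hHY, integral_condExp (hm.trans hm')]

theorem integrable_of_labelled_eq_condExp (hm : m ≤ m') (hm' : m' ≤ mΩ)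
    {N R Y : Ω → ℝ} (hN : StronglyMeasurable[m] N) (hR : StronglyMeasurable[m'] R)
    (hR01 : ∀ ω, R ω = 0 ∨ R ω = 1) (hY : Integrable Y P)
    (hNY : ∀ᵐ ω ∂P, R ω = 1 → N ω = P[Y|m'] ω) {ε : ℝ} (hε : 0 < ε)
    (hRε : ∀ᵐ ω ∂P, ε ≤ P[R|m] ω) :
    Integrable N P := by
  have hRb : ∀ ω, |R ω| ≤ 1 := fun ω => by rcases hR01 ω with h | h <;> simp [h]
  have hRint : Integrable R P := .of_bound (hR.mono hm').aestronglyMeasurable 1 (.of_forall hRb)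
  have hNR : Integrable (N * R) P := by
    rw [mul_comm]
    exact integrable_condExp.congr (mul_ae_eq_condExp_mul hm' hR hRb hY
      (hNY.mono fun ω h hne => h ((hR01 ω).resolve_left hne))).symm
  refine (integrable_condExp (m := m) (f := N * R)).norm.const_mul ε⁻¹ |>.mono'
    (hN.mono (hm.trans hm')).aestronglyMeasurable ?_
  filter_upwards [condExp_mul_of_stronglyMeasurable_left hN hNR hRint, hRε] with ω hpull hω
  rw [hpull, Pi.mul_apply, norm_mul, Real.norm_of_nonneg (hε.le.trans hω), le_inv_mul_iff₀ hε]
  exact mul_comm ε _ ▸ mul_le_mul_of_nonneg_left hω (norm_nonneg _)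

theorem condExp_indicator_ge_mul (hm : m ≤ m') (hm' : m' ≤ mΩ) {E : Set Ω}
    (hE : MeasurableSet[m'] E) {R : Ω → ℝ} (hR : Integrable R P) {ε δ : ℝ} (hε : 0 ≤ ε)
    (hRε : ∀ᵐ ω ∂P, ε ≤ P[R|m'] ω) (hEδ : ∀ᵐ ω ∂P, δ ≤ P[E.indicator 1|m] ω) :
    ∀ᵐ ω ∂P, ε * δ ≤ P[E.indicator R|m] ω := by
  have hEint : Integrable (E.indicator (1 : Ω → ℝ)) P := (integrable_const 1).indicator (hm' E hE)
  have hmono : P[ε • E.indicator 1|m] ≤ᵐ[P] P[E.indicator P[R|m']|m] := by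
    refine condExp_mono (hEint.smul ε) (integrable_condExp.indicator (hm' E hE)) ?_
    filter_upwards [hRε] with ω hω
    by_cases h : ω ∈ E <;> simp [h, hω]
  have htower : P[E.indicator P[R|m']|m] =ᵐ[P] P[E.indicator R|m] :=
    (condExp_congr_ae (condExp_indicator hR hE).symm).trans (condExp_condExp_of_le hm hm')
  filter_upwards [hmono, htower, condExp_smul ε (E.indicator (1 : Ω → ℝ)) m, hEδ]
    with ω h1 h2 h3 h4
  rw [← h2]
  refine le_trans ?_ (h3 ▸ h1)
  exact mul_le_mul_of_nonneg_left h4 hε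

end CondExp

namespace Surrogate

lemma CondIndepBdd.comp_left {Ω α β γ : Type*} {m : MeasurableSpace Ω} [MeasurableSpace Ω]
    [MeasurableSpace α] [MeasurableSpace β] [MeasurableSpace γ] {P : Measure Ω} {U : Ω → α}
    {V : Ω → β} (h : CondIndepBdd P m U V) {φ : α → γ} (hφ : Measurable φ) :
    CondIndepBdd P m (fun ω => φ (U ω)) V :=
  fun f hf ⟨C, hC⟩ => h (f ∘ φ) (hf.comp hφ) ⟨C, fun a => hC (φ a)⟩

theorem CondIndepBdd.condExp_sup_comap_eq {Ω β : Type*} {m : MeasurableSpace Ω}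
    [mΩ : MeasurableSpace Ω] [mβ : MeasurableSpace β] {P : Measure Ω} [IsFiniteMeasure P]
    {Z : Ω → ℝ} {V : Ω → β} (h : CondIndepBdd P m Z V) (hm : m ≤ mΩ) (hZ : Measurable Z)
    {c : ℝ} (hZc : ∀ ω, |Z ω| ≤ c) (hV : Measurable V) :
    P[Z|m ⊔ mβ.comap V] =ᵐ[P] P[Z|m] := by
  set f : ℝ → ℝ := (Ioc (-(c + 1)) (c + 1)).indicator id
  have hfZ : ∀ ω, f (Z ω) = Z ω := fun ω =>
    truncation_eq_self (f := id) (by simpa using (hZc ω).trans_lt (lt_add_one c))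
  refine condExp_sup_comap_eq_of_condIndep hm hV
    (.of_bound hZ.aestronglyMeasurable c (.of_forall hZc)) fun C hC => ?_
  have := h f (measurable_id.indicator measurableSet_Ioc) ⟨_, abs_truncation_le_bound id (c + 1)⟩
    (C.indicator 1) (measurable_const.indicator hC) ⟨1, fun b => by
      by_cases hb : b ∈ C <;> simp [hb]⟩
  simp only [hfZ] at this
  exact this

variable {Ω 𝒳 𝒮 : Type*} [MeasurableSpace 𝒳] [MeasurableSpace 𝒮] {X : Ω → 𝒳} {T R : Ω → ℝ}
  {S : Ω → 𝒮} {t ε : ℝ}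

lemma m2_eq_sup : m2 T X = mX X ⊔ MeasurableSpace.comap T inferInstance :=
  (MeasurableSpace.comap_prodMk T X).trans (sup_comm _ _)

lemma m3_eq_sup : m3 X T S = m2 T X ⊔ MeasurableSpace.comap S inferInstance := by
  have h3 : m3 X T S = mX X ⊔
      (MeasurableSpace.comap T inferInstance ⊔ MeasurableSpace.comap S inferInstance) :=
    (MeasurableSpace.comap_prodMk X _).trans (congrArg _ (MeasurableSpace.comap_prodMk T S))
  rw [h3, m2_eq_sup, sup_assoc]

lemma mX_le_m3 {α : Type*} [MeasurableSpace α] {U : Ω → α} : mX X ≤ m3 T X U :=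
  Measurable.comap_le (f := X)
    ((measurable_fst.comp measurable_snd).comp (comap_measurable fun ω => (T ω, X ω, U ω)))

lemma mX_le_m4 : mX X ≤ m4 T X S R :=
  Measurable.comap_le (f := X)
    ((measurable_fst.comp measurable_snd).comp (comap_measurable fun ω => (T ω, X ω, S ω, R ω)))

lemma m3_le_m4 : m3 T X S ≤ m4 T X S R :=
  Measurable.comap_le (f := fun ω => (T ω, X ω, S ω))
    ((measurable_fst.prodMk ((measurable_fst.comp measurable_snd).prodMk
      (measurable_fst.comp (measurable_snd.comp measurable_snd)))).comp
      (comap_measurable fun ω => (T ω, X ω, S ω, R ω)))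

lemma obs_eq_pot {α : Type*} {a0 a1 : Ω → α} (ht : t = 0 ∨ t = 1) {ω : Ω} (hω : T ω = t) :
    obs T a0 a1 ω = pot a0 a1 t ω := by
  rcases ht with rfl | rfl <;> simp [obs, pot, hω]

lemma indicator_mul_obs_eq {a0 a1 : Ω → ℝ} (ht : t = 0 ∨ t = 1) :
    (T ⁻¹' {t}).indicator R * obs T a0 a1 = (T ⁻¹' {t}).indicator R * pot a0 a1 t := by
  ext ω
  by_cases h : T ω = t
  · simp [obs_eq_pot ht h]
  · simp [h]

lemma eq_and_eq_one_of_indicator_ne_zero (hR01 : ∀ ω, R ω = 0 ∨ R ω = 1) {ω : Ω}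
    (h : (T ⁻¹' {t}).indicator R ω ≠ 0) : T ω = t ∧ R ω = 1 := by
  by_cases hT : T ω = t
  · exact ⟨hT, (hR01 ω).resolve_left (by simpa [hT] using h)⟩
  · simp [hT] at h

lemma abs_indicator_le_one (hR01 : ∀ ω, R ω = 0 ∨ R ω = 1) (ω : Ω) :
    |(T ⁻¹' {t}).indicator R ω| ≤ 1 := by
  by_cases hT : T ω = t <;> rcases hR01 ω with h | h <;> simp [hT, h]

lemma stronglyMeasurable_indicator_preimage {m : MeasurableSpace Ω} (hT : Measurable[m] T)
    (hR : Measurable[m] R) : StronglyMeasurable[m] ((T ⁻¹' {t}).indicator R) :=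
  (hR.indicator (hT (measurableSet_singleton t))).stronglyMeasurable

variable [mΩ : MeasurableSpace Ω] {P : Measure Ω}

lemma measurable_pot {α : Type*} [MeasurableSpace α] {a0 a1 : Ω → α} (h0 : Measurable a0)
    (h1 : Measurable a1) : Measurable (pot a0 a1 t) := by
  unfold pot; split_ifs <;> assumption

lemma measurable_obs {α : Type*} [MeasurableSpace α] {a0 a1 : Ω → α} (hT : Measurable T)
    (h0 : Measurable a0) (h1 : Measurable a1) : Measurable (obs T a0 a1) :=
  Measurable.ite (hT (measurableSet_singleton 1)) h1 h0

lemma integrable_pot {a0 a1 : Ω → ℝ} (h0 : Integrable a0 P) (h1 : Integrable a1 P) :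
    Integrable (pot a0 a1 t) P := by
  unfold pot; split_ifs <;> assumption

lemma integrable_obs {a0 a1 : Ω → ℝ} (hT : Measurable T) (h0 : Integrable a0 P)
    (h1 : Integrable a1 P) : Integrable (obs T a0 a1) P := by
  have hs : MeasurableSet (T ⁻¹' {1}) := hT (measurableSet_singleton 1)
  have : obs T a0 a1 = (T ⁻¹' {1}).indicator a1 + (T ⁻¹' {1})ᶜ.indicator a0 := by
    ext ω; by_cases h : T ω = 1 <;> simp [obs, h]
  rw [this]; exact (h1.indicator hs).add (h0.indicator hs.compl)

lemma ae_le_condExp_label {S0 S1 : Ω → 𝒮} {r : ℝ → 𝒳 → 𝒮 → ℝ}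
    (hT01 : ∀ ω, T ω = 0 ∨ T ω = 1)
    (hrSpec : (fun ω => r (T ω) (X ω) (obs T S0 S1 ω)) =ᵐ[P] P[R|m3 T X (obs T S0 S1)])
    (h2r : ∀ t : ℝ, t = 0 ∨ t = 1 → ∀ᵐ ω ∂P, ε ≤ r t (X ω) (pot S0 S1 t ω)) :
    ∀ᵐ ω ∂P, ε ≤ P[R|m3 T X (obs T S0 S1)] ω := by
  filter_upwards [hrSpec, h2r 0 (.inl rfl), h2r 1 (.inr rfl)] with ω hr h0 h1
  rw [← hr]
  rcases hT01 ω with h | h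
  · rw [obs_eq_pot (.inl rfl) h, h]; exact h0
  · rw [obs_eq_pot (.inr rfl) h, h]; exact h1

variable [IsFiniteMeasure P]

lemma condExp_indicator_mul_eq_of_missingAtRandom (hX : Measurable X) (hT : Measurable T)
    (hR : Measurable R) (hS : Measurable S) (hRb : ∀ ω, |R ω| ≤ 1) {G : Ω → ℝ}
    (hG : Measurable G) {C : ℝ} (hGC : ∀ ω, |G ω| ≤ C)
    (hMAR : ∀ᵐ ω ∂P, T ω = t → P[R * G|m3 X T S] ω = P[R|m3 X T S] ω * P[G|m3 X T S] ω)
    (hRS : CondIndepBdd P (m2 T X) R S) :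
    P[(T ⁻¹' {t}).indicator (R * G)|m2 T X]
      =ᵐ[P] (T ⁻¹' {t}).indicator P[R|m2 T X] * P[G|m2 T X] := by
  set E := T ⁻¹' {t}
  have hmS : m3 X T S ≤ mΩ := (hX.prodMk (hT.prodMk hS)).comap_le
  have hle : m2 T X ≤ m3 X T S := by rw [m3_eq_sup]; exact le_sup_left
  have hE : MeasurableSet[m2 T X] E :=
    measurable_fst.comp (comap_measurable _) (measurableSet_singleton t)
  have hRint : Integrable R P := .of_bound hR.aestronglyMeasurable 1 (.of_forall hRb)
  have hGint : Integrable G P := .of_bound hG.aestronglyMeasurable C (.of_forall hGC)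
  have hρ : P[R|m3 X T S] =ᵐ[P] P[R|m2 T X] := by
    rw [m3_eq_sup]; exact hRS.condExp_sup_comap_eq (hle.trans hmS) hR hRb hS
  have hEρ : ∀ᵐ ω ∂P, ‖E.indicator P[R|m2 T X] ω‖ ≤ 1 := by
    filter_upwards [ae_bdd_abs_condExp_of_ae_bdd_abs (m := m2 T X) (.of_forall hRb)] with ω hω
    by_cases h : ω ∈ E <;> simp_all
  have hEρm : StronglyMeasurable[m2 T X] (E.indicator P[R|m2 T X]) :=
    stronglyMeasurable_condExp.indicator hE
  have hmS_eq : P[E.indicator (R * G)|m3 X T S] =ᵐ[P] P[E.indicator P[R|m2 T X] * G|m3 X T S] :=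
    calc P[E.indicator (R * G)|m3 X T S]
        =ᵐ[P] E.indicator P[R * G|m3 X T S] :=
          condExp_indicator (hGint.bdd_mul hR.aestronglyMeasurable (.of_forall hRb)) (hle E hE)
      _ =ᵐ[P] E.indicator P[R|m2 T X] * P[G|m3 X T S] := by
          filter_upwards [hMAR, hρ] with ω hMω hρω
          by_cases h : ω ∈ E
          · simp [h, hMω h, hρω]
          · simp [h]
      _ =ᵐ[P] P[E.indicator P[R|m2 T X] * G|m3 X T S] :=
          (condExp_stronglyMeasurable_mul_of_bound hmS (hEρm.mono hle) hGint 1 hEρ).symm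
  calc P[E.indicator (R * G)|m2 T X]
      =ᵐ[P] P[P[E.indicator (R * G)|m3 X T S]|m2 T X] := (condExp_condExp_of_le hle hmS).symm
    _ =ᵐ[P] P[P[E.indicator P[R|m2 T X] * G|m3 X T S]|m2 T X] := condExp_congr_ae hmS_eq
    _ =ᵐ[P] P[E.indicator P[R|m2 T X] * G|m2 T X] := condExp_condExp_of_le hle hmS
    _ =ᵐ[P] E.indicator P[R|m2 T X] * P[G|m2 T X] :=
        condExp_stronglyMeasurable_mul_of_bound (hle.trans hmS) hEρm hGint 1 hEρ

lemma condExp_indicator_mul_eq_of_bdd (hX : Measurable X) (hT : Measurable T) (hR : Measurable R)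
    (hS : Measurable S) (hRb : ∀ ω, |R ω| ≤ 1) {G : Ω → ℝ} (hG : Measurable G) {C : ℝ}
    (hGC : ∀ ω, |G ω| ≤ C)
    (hMAR : ∀ᵐ ω ∂P, T ω = t → P[R * G|m3 X T S] ω = P[R|m3 X T S] ω * P[G|m3 X T S] ω)
    (hRS : CondIndepBdd P (m2 T X) R S) (hGT : CondIndepBdd P (mX X) G T) :
    P[(T ⁻¹' {t}).indicator R * G|mX X]
      =ᵐ[P] P[P[(T ⁻¹' {t}).indicator R|mX X] * G|mX X] := by
  set E := T ⁻¹' {t}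
  have hmX : mX X ≤ m2 T X := by rw [m2_eq_sup]; exact le_sup_left
  have hm2 : m2 T X ≤ mΩ := (hT.prodMk hX).comap_le
  have hE : MeasurableSet[m2 T X] E :=
    measurable_fst.comp (comap_measurable _) (measurableSet_singleton t)
  have hRint : Integrable R P := .of_bound hR.aestronglyMeasurable 1 (.of_forall hRb)
  have hGint : Integrable G P := .of_bound hG.aestronglyMeasurable C (.of_forall hGC)
  have hWb : ∀ ω, |E.indicator R ω| ≤ 1 := fun ω => by
    by_cases h : ω ∈ E <;> simp [h, hRb ω]
  have hG2 : P[G|m2 T X] =ᵐ[P] P[G|mX X] := by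
    rw [m2_eq_sup]; exact hGT.condExp_sup_comap_eq (hmX.trans hm2) hG hGC hT
  have hq : P[E.indicator P[R|m2 T X]|mX X] =ᵐ[P] P[E.indicator R|mX X] :=
    (condExp_congr_ae (condExp_indicator hRint hE).symm).trans (condExp_condExp_of_le hmX hm2)
  have hWG : E.indicator R * G = E.indicator (R * G) := by
    ext ω; exact (indicator_mul_left E R G).symm
  calc P[E.indicator R * G|mX X]
      =ᵐ[P] P[P[E.indicator (R * G)|m2 T X]|mX X] := by
        rw [hWG]; exact (condExp_condExp_of_le hmX hm2).symm
    _ =ᵐ[P] P[P[G|mX X] * E.indicator P[R|m2 T X]|mX X] := by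
        refine condExp_congr_ae ?_
        filter_upwards [condExp_indicator_mul_eq_of_missingAtRandom hX hT hR hS hRb hG hGC hMAR hRS,
          hG2] with ω h1 h2
        rw [h1, Pi.mul_apply, Pi.mul_apply, h2, mul_comm]
    _ =ᵐ[P] P[G|mX X] * P[E.indicator P[R|m2 T X]|mX X] :=
        condExp_stronglyMeasurable_mul_of_bound (hmX.trans hm2) stronglyMeasurable_condExp
          (integrable_condExp.indicator (hm2 E hE)) C
          (ae_bdd_abs_condExp_of_ae_bdd_abs (.of_forall hGC))
    _ =ᵐ[P] P[E.indicator R|mX X] * P[G|mX X] := by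
        filter_upwards [hq] with ω h
        rw [Pi.mul_apply, Pi.mul_apply, h, mul_comm]
    _ =ᵐ[P] P[P[E.indicator R|mX X] * G|mX X] :=
        (condExp_stronglyMeasurable_mul_of_bound (hmX.trans hm2) stronglyMeasurable_condExp hGint 1
          (ae_bdd_abs_condExp_of_ae_bdd_abs (.of_forall hWb))).symm

theorem condExp_indicator_mul_eq_mul_condExp (hX : Measurable X) (hT : Measurable T)
    (hR : Measurable R) (hS : Measurable S) (hRb : ∀ ω, |R ω| ≤ 1) {Y : Ω → ℝ} (hY : Measurable Y)
    (hYint : Integrable Y P)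
    (hMAR : ∀ g : ℝ → ℝ, Measurable g → Bdd g → ∀ᵐ ω ∂P, T ω = t →
      P[fun ω' => R ω' * g (Y ω')|m3 X T S] ω
        = P[R|m3 X T S] ω * P[fun ω' => g (Y ω')|m3 X T S] ω)
    (hRS : CondIndepBdd P (m2 T X) R S) (hYT : CondIndepBdd P (mX X) Y T) :
    P[(T ⁻¹' {t}).indicator R * Y|mX X]
      =ᵐ[P] P[(T ⁻¹' {t}).indicator R|mX X] * P[Y|mX X] := by
  have hWb : ∀ ω, |(T ⁻¹' {t}).indicator R ω| ≤ 1 := fun ω => by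
    by_cases h : ω ∈ T ⁻¹' {t} <;> simp [h, hRb ω]
  have hqb := ae_bdd_abs_condExp_of_ae_bdd_abs (m := mX X) (μ := P) (.of_forall hWb)
  refine (condExp_mul_ae_eq_of_forall_bdd
    (hR.indicator (hT (measurableSet_singleton t))).aestronglyMeasurable
    (stronglyMeasurable_condExp.mono hX.comap_le).aestronglyMeasurable (.of_forall hWb) hqb hYint
    fun g hg ⟨C, hC⟩ => ?_).trans
    (condExp_stronglyMeasurable_mul_of_bound hX.comap_le stronglyMeasurable_condExp hYint 1 hqb)
  exact condExp_indicator_mul_eq_of_bdd hX hT hR hS hRb (hg.comp hY) (fun ω => hC (Y ω))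
    (hMAR g hg ⟨C, hC⟩) hRS (hYT.comp_left hg)

lemma ae_le_condExp_treated {e : 𝒳 → ℝ} (hX : Measurable X) (hT : Measurable T)
    (hT01 : ∀ ω, T ω = 0 ∨ T ω = 1)
    (heSpec : (fun ω => e (X ω)) =ᵐ[P] P[T|mX X])
    (h2e : ∀ᵐ ω ∂P, ε ≤ e (X ω) ∧ e (X ω) ≤ 1 - ε) (ht : t = 0 ∨ t = 1) :
    ∀ᵐ ω ∂P, ε ≤ P[(T ⁻¹' {t}).indicator 1|mX X] ω := by
  have hTint : Integrable T P := .of_bound hT.aestronglyMeasurable 1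
    (.of_forall fun ω => by rcases hT01 ω with h | h <;> simp [h])
  rcases ht with rfl | rfl
  · have h1T : (T ⁻¹' {0}).indicator 1 = (fun _ => 1) - T := by
      ext ω; rcases hT01 ω with h | h <;> simp [h]
    rw [h1T]
    filter_upwards [condExp_sub (integrable_const 1) hTint (mX X), heSpec, h2e] with ω h1 h2 h3
    have hc : P[fun _ => (1 : ℝ)|mX X] = fun _ => 1 := condExp_const hX.comap_le 1
    rw [h1, Pi.sub_apply, hc, ← h2]
    linarith [h3.2]
  · have hT1 : (T ⁻¹' {1}).indicator 1 = T := by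
      ext ω; rcases hT01 ω with h | h <;> simp [h]
    rw [hT1]
    filter_upwards [heSpec, h2e] with ω h1 h2
    rw [← h1]; exact h2.1

lemma ae_condExp_indicator_ne_zero {S0 S1 : Ω → 𝒮} (hX : Measurable X)
    (hT : Measurable T) (hR : Measurable R) (hS0 : Measurable S0) (hS1 : Measurable S1)
    (hT01 : ∀ ω, T ω = 0 ∨ T ω = 1) (hR01 : ∀ ω, R ω = 0 ∨ R ω = 1) {e : 𝒳 → ℝ}
    (heSpec : (fun ω => e (X ω)) =ᵐ[P] P[T|mX X])
    (h2e : ∀ᵐ ω ∂P, ε ≤ e (X ω) ∧ e (X ω) ≤ 1 - ε) {r : ℝ → 𝒳 → 𝒮 → ℝ}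
    (hrSpec : (fun ω => r (T ω) (X ω) (obs T S0 S1 ω)) =ᵐ[P] P[R|m3 T X (obs T S0 S1)])
    (h2r : ∀ t : ℝ, t = 0 ∨ t = 1 → ∀ᵐ ω ∂P, ε ≤ r t (X ω) (pot S0 S1 t ω)) (hε : 0 < ε)
    (ht : t = 0 ∨ t = 1) :
    ∀ᵐ ω ∂P, P[(T ⁻¹' {t}).indicator R|mX X] ω ≠ 0 := by
  have hRint : Integrable R P := .of_bound hR.aestronglyMeasurable 1
    (.of_forall fun ω => by rcases hR01 ω with h | h <;> simp [h])
  filter_upwards [condExp_indicator_ge_mul mX_le_m3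
    (hT.prodMk (hX.prodMk (measurable_obs hT hS0 hS1))).comap_le
    (measurable_fst.comp (comap_measurable _) (measurableSet_singleton t)) hRint hε.le
    (ae_le_condExp_label hT01 hrSpec h2r) (ae_le_condExp_treated hX hT hT01 heSpec h2e ht)]
    with ω h
  exact ((mul_pos hε hε).trans_le h).ne'

lemma integral_eq_of_labelled_eq_condExp (hX : Measurable X) (hT : Measurable T)
    (hR : Measurable R) (hR01 : ∀ ω, R ω = 0 ∨ R ω = 1)
    (hq : ∀ᵐ ω ∂P, P[(T ⁻¹' {t}).indicator R|mX X] ω ≠ 0) {Z Y : Ω → ℝ} (hZ : Integrable Z P)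
    (hZY : P[(T ⁻¹' {t}).indicator R * Z|mX X]
      =ᵐ[P] P[(T ⁻¹' {t}).indicator R|mX X] * P[Y|mX X])
    {H : 𝒳 → ℝ} (hH : Measurable H)
    (hHZ : ∀ᵐ ω ∂P, T ω = t ∧ R ω = 1 → H (X ω) = P[Z|m3 T X R] ω) :
    ∫ ω, H (X ω) ∂P = ∫ ω, Y ω ∂P :=
  integral_eq_of_ae_eq_condExp_of_ne_zero mX_le_m3
    (hT.prodMk (hX.prodMk hR)).comap_le
    (stronglyMeasurable_indicator_preimage (measurable_fst.comp (comap_measurable _))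
      ((measurable_snd.comp measurable_snd).comp (comap_measurable _)))
    (abs_indicator_le_one hR01) hZ (hH.comp (comap_measurable X)).stronglyMeasurable
    (hHZ.mono fun _ h hne => h (eq_and_eq_one_of_indicator_ne_zero hR01 hne)) hq hZY

lemma condExp_indicator_mul_eq_of_labelled_eq_condExp (hX : Measurable X)
    (hT : Measurable T) (hR : Measurable R) (hS : Measurable S)
    (hR01 : ∀ ω, R ω = 0 ∨ R ω = 1) {N Y : Ω → ℝ} (hY : Integrable Y P)
    (hNY : ∀ᵐ ω ∂P, R ω = 1 → N ω = P[Y|m4 T X S R] ω) :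
    P[(T ⁻¹' {t}).indicator R * N|mX X] =ᵐ[P] P[(T ⁻¹' {t}).indicator R * Y|mX X] := by
  have hm4 : m4 T X S R ≤ mΩ := (hT.prodMk (hX.prodMk (hS.prodMk hR))).comap_le
  have hW : StronglyMeasurable[m4 T X S R] ((T ⁻¹' {t}).indicator R) :=
    stronglyMeasurable_indicator_preimage (measurable_fst.comp (comap_measurable _))
    ((measurable_snd.comp (measurable_snd.comp measurable_snd)).comp (comap_measurable _))
  exact (condExp_congr_ae (mul_ae_eq_condExp_mul hm4 hW (abs_indicator_le_one hR01) hY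
    (hNY.mono fun _ h hne => h (eq_and_eq_one_of_indicator_ne_zero hR01 hne).2))).trans
    (condExp_condExp_of_le mX_le_m4 hm4)

lemma integrable_comp_of_labelled_eq_condExp (hX : Measurable X) (hT : Measurable T)
    (hR : Measurable R) (hS : Measurable S) (hR01 : ∀ ω, R ω = 0 ∨ R ω = 1)
    {ν : ℝ → 𝒳 → 𝒮 → ℝ} (hν : Measurable fun p : ℝ × 𝒳 × 𝒮 => ν p.1 p.2.1 p.2.2)
    {Y : Ω → ℝ} (hY : Integrable Y P)
    (hνY : ∀ᵐ ω ∂P, R ω = 1 → ν (T ω) (X ω) (S ω) = P[Y|m4 T X S R] ω) (hε : 0 < ε)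
    (hRε : ∀ᵐ ω ∂P, ε ≤ P[R|m3 T X S] ω) :
    Integrable (fun ω => ν (T ω) (X ω) (S ω)) P :=
  integrable_of_labelled_eq_condExp m3_le_m4
    (hT.prodMk (hX.prodMk (hS.prodMk hR))).comap_le
    (hν.comp (comap_measurable _)).stronglyMeasurable
    ((measurable_snd.comp (measurable_snd.comp measurable_snd)).comp
      (comap_measurable _)).stronglyMeasurable
    hR01 hY hνY hε hRε

end Surrogate

theorem statement2_general
    {Ω 𝒳 𝒮 : Type*} [MeasurableSpace Ω] [MeasurableSpace 𝒳] [MeasurableSpace 𝒮]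
    (P : Measure Ω) [IsProbabilityMeasure P]
    -- the random variables of the model
    (X : Ω → 𝒳) (T R : Ω → ℝ) (S0 S1 : Ω → 𝒮) (Y0 Y1 : Ω → ℝ)
    (hX : Measurable X) (hT : Measurable T) (hR : Measurable R)
    (hS0 : Measurable S0) (hS1 : Measurable S1)
    (hY0 : Measurable Y0) (hY1 : Measurable Y1)
    (hT01 : ∀ ω, T ω = 0 ∨ T ω = 1) (hR01 : ∀ ω, R ω = 0 ∨ R ω = 1)
    -- the treatment propensity e* (note that E[T|σ(X)] = P(T=1|σ(X)))
    (e : 𝒳 → ℝ)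
    (heSpec : (fun ω => e (X ω)) =ᵐ[P] P[T|mX X])
    -- the labeling propensity r* (note that E[R|σ(T,X,S)] = P(R=1|σ(T,X,S)))
    (r : ℝ → 𝒳 → 𝒮 → ℝ)
    (hrSpec : (fun ω => r (T ω) (X ω) (obs T S0 S1 ω)) =ᵐ[P] P[R|m3 T X (obs T S0 S1)])
    -- Assumption 1 (unconfoundedness)
    (h1i : ∀ t : ℝ, t = 0 ∨ t = 1 →
      CondIndepBdd P (mX X) (fun ω => (pot Y0 Y1 t ω, pot S0 S1 t ω)) T)
    (h1ii : ∀ t : ℝ, t = 0 ∨ t = 1 → ∀ g : ℝ → ℝ, Measurable g → Bdd g →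
      ∀ᵐ ω ∂P, T ω = t →
        (P[fun ω' => R ω' * g (pot Y0 Y1 t ω')|m3 X T (pot S0 S1 t)]) ω
          = (P[R|m3 X T (pot S0 S1 t)]) ω
            * (P[fun ω' => g (pot Y0 Y1 t ω')|m3 X T (pot S0 S1 t)]) ω)
    -- Assumption 2 (strict overlap)
    (ε : ℝ) (hε0 : 0 < ε)
    (h2e : ∀ᵐ ω ∂P, ε ≤ e (X ω) ∧ e (X ω) ≤ 1 - ε)
    (h2r : ∀ t : ℝ, t = 0 ∨ t = 1 → ∀ᵐ ω ∂P, ε ≤ r t (X ω) (pot S0 S1 t ω))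
    -- Assumption 3
    (h3 : ∀ t : ℝ, t = 0 ∨ t = 1 → CondIndepBdd P (m2 T X) R (pot S0 S1 t))
    -- Y(0), Y(1) ∈ L¹(P)
    (hY0int : Integrable Y0 P) (hY1int : Integrable Y1 P)
    -- the labelled-data outcome regression ν
    (ν : ℝ → 𝒳 → 𝒮 → ℝ) (hν : Measurable fun p : ℝ × 𝒳 × 𝒮 => ν p.1 p.2.1 p.2.2)
    (hνSpec : ∀ᵐ ω ∂P, R ω = 1 →
      ν (T ω) (X ω) (obs T S0 S1 ω) = (P[obs T Y0 Y1|m4 T X (obs T S0 S1) R]) ω)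
    :
    ∀ t : ℝ, t = 0 ∨ t = 1 →
      (∀ h : 𝒳 → ℝ, Measurable h →
        (∀ᵐ ω ∂P, T ω = t ∧ R ω = 1 →
          h (X ω) = (P[fun ω' => ν (T ω') (X ω') (obs T S0 S1 ω')|m3 T X R]) ω) →
        ∫ ω, pot Y0 Y1 t ω ∂P = ∫ ω, h (X ω) ∂P)
      ∧ (∀ m : 𝒳 → ℝ, Measurable m →
        (∀ᵐ ω ∂P, T ω = t ∧ R ω = 1 →
          m (X ω) = (P[obs T Y0 Y1|m3 T X R]) ω) →
        ∫ ω, pot Y0 Y1 t ω ∂P = ∫ ω, m (X ω) ∂P) := by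
  intro t ht
  have hRb : ∀ ω, |R ω| ≤ 1 := fun ω => by rcases hR01 ω with h | h <;> simp [h]
  have hSobs : Measurable (obs T S0 S1) := measurable_obs hT hS0 hS1
  have hYobs : Integrable (obs T Y0 Y1) P := integrable_obs hT hY0int hY1int
  have hq := ae_condExp_indicator_ne_zero hX hT hR hS0 hS1 hT01 hR01 heSpec h2e hrSpec h2r
    hε0 ht
  have hkey : P[(T ⁻¹' {t}).indicator R * obs T Y0 Y1|mX X]
      =ᵐ[P] P[(T ⁻¹' {t}).indicator R|mX X] * P[pot Y0 Y1 t|mX X] := by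
    rw [indicator_mul_obs_eq ht]
    exact condExp_indicator_mul_eq_mul_condExp hX hT hR (measurable_pot hS0 hS1) hRb
      (measurable_pot hY0 hY1) (integrable_pot hY0int hY1int) (h1ii t ht) (h3 t ht)
      ((h1i t ht).comp_left measurable_fst)
  refine ⟨fun h hh hhν => ?_, fun m hm hmY =>
    (integral_eq_of_labelled_eq_condExp hX hT hR hR01 hq hYobs hkey hm hmY).symm⟩
  have hνint := integrable_comp_of_labelled_eq_condExp hX hT hR hSobs hR01 hν hYobs hνSpec hε0
    (ae_le_condExp_label hT01 hrSpec h2r)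
  have hνY := condExp_indicator_mul_eq_of_labelled_eq_condExp (t := t) hX hT hR hSobs hR01
    hYobs hνSpec
  exact (integral_eq_of_labelled_eq_condExp hX hT hR hR01 hq hνint (hνY.trans hkey) hh hhν).symm

/-- Identification without surrogates on the unlabelled data (Settings I and II):
under Assumptions 1, 2 and 3, `E[Y(t)] = E[h_t(X)]` for any measurable `h_t` agreeing a.s. on
`{T = t, R = 1}` with `E[ν(T,X,S)|σ(T,X,R)]`, and `E[Y(t)] = E[m_t(X)]` for any measurable `m_t`
agreeing a.s. on `{T = t, R = 1}` with `E[Y|σ(T,X,R)]`. -/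
theorem statement2
    {Ω 𝒳 𝒮 : Type*} [MeasurableSpace Ω] [MeasurableSpace 𝒳] [MeasurableSpace 𝒮]
    [StandardBorelSpace 𝒳] [StandardBorelSpace 𝒮]
    (P : Measure Ω) [IsProbabilityMeasure P]
    -- the random variables of the model
    (X : Ω → 𝒳) (T R : Ω → ℝ) (S0 S1 : Ω → 𝒮) (Y0 Y1 : Ω → ℝ)
    (hX : Measurable X) (hT : Measurable T) (hR : Measurable R)
    (hS0 : Measurable S0) (hS1 : Measurable S1)
    (hY0 : Measurable Y0) (hY1 : Measurable Y1)
    (hT01 : ∀ ω, T ω = 0 ∨ T ω = 1) (hR01 : ∀ ω, R ω = 0 ∨ R ω = 1)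
    -- the treatment propensity e* (note that E[T|σ(X)] = P(T=1|σ(X)))
    (e : 𝒳 → ℝ) (he : Measurable e) (heRange : ∀ x, e x ∈ Set.Icc (0 : ℝ) 1)
    (heSpec : (fun ω => e (X ω)) =ᵐ[P] P[T|mX X])
    -- the labeling propensity r* (note that E[R|σ(T,X,S)] = P(R=1|σ(T,X,S)))
    (r : ℝ → 𝒳 → 𝒮 → ℝ) (hr : Measurable fun p : ℝ × 𝒳 × 𝒮 => r p.1 p.2.1 p.2.2)
    (hrRange : ∀ t x s, r t x s ∈ Set.Icc (0 : ℝ) 1)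
    (hrSpec : (fun ω => r (T ω) (X ω) (obs T S0 S1 ω)) =ᵐ[P] P[R|m3 T X (obs T S0 S1)])
    -- Assumption 1 (unconfoundedness)
    (h1i : ∀ t : ℝ, t = 0 ∨ t = 1 →
      CondIndepBdd P (mX X) (fun ω => (pot Y0 Y1 t ω, pot S0 S1 t ω)) T)
    (h1ii : ∀ t : ℝ, t = 0 ∨ t = 1 → ∀ g : ℝ → ℝ, Measurable g → Bdd g →
      ∀ᵐ ω ∂P, T ω = t →
        (P[fun ω' => R ω' * g (pot Y0 Y1 t ω')|m3 X T (pot S0 S1 t)]) ω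
          = (P[R|m3 X T (pot S0 S1 t)]) ω
            * (P[fun ω' => g (pot Y0 Y1 t ω')|m3 X T (pot S0 S1 t)]) ω)
    -- Assumption 2 (strict overlap)
    (ε : ℝ) (hε0 : 0 < ε) (hε : ε < 1 / 2)
    (h2e : ∀ᵐ ω ∂P, ε ≤ e (X ω) ∧ e (X ω) ≤ 1 - ε)
    (h2r : ∀ t : ℝ, t = 0 ∨ t = 1 → ∀ᵐ ω ∂P, ε ≤ r t (X ω) (pot S0 S1 t ω))
    -- Assumption 3
    (h3 : ∀ t : ℝ, t = 0 ∨ t = 1 → CondIndepBdd P (m2 T X) R (pot S0 S1 t))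
    -- Y(0), Y(1) ∈ L¹(P)
    (hY0int : Integrable Y0 P) (hY1int : Integrable Y1 P)
    -- the labelled-data outcome regression ν
    (ν : ℝ → 𝒳 → 𝒮 → ℝ) (hν : Measurable fun p : ℝ × 𝒳 × 𝒮 => ν p.1 p.2.1 p.2.2)
    (hνSpec : ∀ᵐ ω ∂P, R ω = 1 →
      ν (T ω) (X ω) (obs T S0 S1 ω) = (P[obs T Y0 Y1|m4 T X (obs T S0 S1) R]) ω)
    :
    ∀ t : ℝ, t = 0 ∨ t = 1 →
      (∀ h : 𝒳 → ℝ, Measurable h →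
        (∀ᵐ ω ∂P, T ω = t ∧ R ω = 1 →
          h (X ω) = (P[fun ω' => ν (T ω') (X ω') (obs T S0 S1 ω')|m3 T X R]) ω) →
        ∫ ω, pot Y0 Y1 t ω ∂P = ∫ ω, h (X ω) ∂P)
      ∧ (∀ m : 𝒳 → ℝ, Measurable m →
        (∀ᵐ ω ∂P, T ω = t ∧ R ω = 1 →
          m (X ω) = (P[obs T Y0 Y1|m3 T X R]) ω) →
        ∫ ω, pot Y0 Y1 t ω ∂P = ∫ ω, m (X ω) ∂P) :=
  statement2_general P X T R S0 S1 Y0 Y1 hX hT hR hS0 hS1 hY0 hY1 hT01 hR01 e heSpec r hrSpec h1i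
    h1ii ε hε0 h2e h2r h3 hY0int hY1int ν hν hνSpec
end
end

section
/- Closed form of the efficiency lower bound with fully observed outcomes (Corollary, Setting IV). Under Assumption 1(i), ε ≤ e*(X) ≤ 1−ε a.s. for some ε ∈ (0,1/2), and Y(0), Y(1) ∈ L²(P): E[ψ_IV²] = Var[ (T/e*(X) − (1−T)/(1−e*(X)))·Y ] − E[ ( √((1−e*(X))/e*(X))·μ*(1,X) + √(e*(X)/(1−e*(X)))·μ*(0,X) )² ], where Var[Z] := E[Z²] − (E[Z])². -/
open MeasureTheory ProbabilityTheory Filter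
open scoped ENNReal NNReal Topology

noncomputable section

open Surrogate

/-!
Put `W = T Y / e − (1 − T) Y / (1 − e)`, `μₜ = μ*(t, X)`, and split both `ψ_IV` and `W` into the
same residual part `B = T (Y(1) − μ₁) / e − (1 − T) (Y(0) − μ₀) / (1 − e)` plus a part built
from the regressions: `ψ_IV = B + (μ₁ − μ₀ − δ*)` and `W = B + M` with
`M = T μ₁ / e − (1 − T) μ₀ / (1 − e)`.

Assumption 1(i) makes `T (Y(1) − μ₁)` and `(1 − T) (Y(0) − μ₀)` orthogonal to every square
integrable `σ(X)`-measurable function: for bounded functions of `Y(t)` this is the definition of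
conditional independence, and truncating `Y(t)` and passing to the limit by dominated
convergence gives it in general. Since `T² = T` and `T (1 − T) = 0`, both `B (μ₁ − μ₀ − δ*)` and
`B M` are sums of such products, so Pythagoras gives `E[ψ_IV²] = E[B²] + E[(μ₁ − μ₀ − δ*)²]` and
`E[W²] = E[B²] + E[M²]`. Finally `E[W] = δ*`, `E[M²] = E[μ₁² / e + μ₀² / (1 − e)]`, and
`(√((1 − e) / e) μ₁ + √(e / (1 − e)) μ₀)² = μ₁² / e + μ₀² / (1 − e) − (μ₁ − μ₀)²`.
-/

namespace Surrogate

section Integral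

variable {Ω : Type*} {m m0 : MeasurableSpace Ω} {P : Measure Ω}

theorem integral_mul_condExp [IsFiniteMeasure P] (hm : m ≤ m0) {G f : Ω → ℝ}
    (hG : StronglyMeasurable[m] G) (hf : Integrable f P)
    (hGf : Integrable (fun ω => G ω * f ω) P) :
    ∫ ω, G ω * f ω ∂P = ∫ ω, G ω * (P[f|m]) ω ∂P := by
  rw [← integral_condExp hm]
  exact integral_congr_ae (condExp_mul_of_stronglyMeasurable_left hG hGf hf)

theorem integral_add_sq_of_integral_mul_eq_zero {f g : Ω → ℝ} (hf : MemLp f 2 P)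
    (hg : MemLp g 2 P) (hfg : ∫ ω, f ω * g ω ∂P = 0) :
    ∫ ω, (f ω + g ω) ^ 2 ∂P = ∫ ω, f ω ^ 2 ∂P + ∫ ω, g ω ^ 2 ∂P := by
  have hfg' : Integrable (fun ω => 2 * (f ω * g ω)) P := (hf.integrable_mul hg).const_mul 2
  calc ∫ ω, (f ω + g ω) ^ 2 ∂P = ∫ ω, (f ω ^ 2 + 2 * (f ω * g ω)) + g ω ^ 2 ∂P := by
        congr 1; ext ω; ring
    _ = ∫ ω, f ω ^ 2 ∂P + ∫ ω, g ω ^ 2 ∂P := by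
        rw [integral_add (f := fun ω => f ω ^ 2 + 2 * (f ω * g ω))
            (hf.integrable_sq.add hfg') hg.integrable_sq,
          integral_add hf.integrable_sq hfg', integral_const_mul, hfg, mul_zero, add_zero]

theorem integral_sq_eq_integral_sub_sq_add_sq [IsProbabilityMeasure P] {f : Ω → ℝ}
    (hf : MemLp f 2 P) {c : ℝ} (hc : ∫ ω, f ω ∂P = c) :
    ∫ ω, f ω ^ 2 ∂P = ∫ ω, (f ω - c) ^ 2 ∂P + c ^ 2 := by
  have hfc : MemLp (fun ω => f ω - c) 2 P := hf.sub (memLp_const c)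
  have := integral_add_sq_of_integral_mul_eq_zero hfc (memLp_const c)
    (by rw [integral_mul_const, integral_sub (hf.integrable one_le_two) (integrable_const c), hc,
      integral_const, probReal_univ, one_smul, sub_self, zero_mul])
  simpa only [Pi.sub_apply, sub_add_cancel, integral_const, probReal_univ, one_smul] using this

end Integral

def clip (c y : ℝ) : ℝ := max (-c) (min y c)

theorem measurable_clip (c : ℝ) : Measurable (clip c) := by
  unfold clip; fun_prop

theorem abs_clip_le_abs_left (c y : ℝ) : |clip c y| ≤ |c| := by
  unfold clip; grind [abs_le]

theorem abs_clip_le {c : ℝ} (hc : 0 ≤ c) (y : ℝ) : |clip c y| ≤ |y| := by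
  unfold clip; grind [abs_le]

theorem clip_of_abs_le {c y : ℝ} (h : |y| ≤ c) : clip c y = y := by
  unfold clip; grind [abs_le]

theorem tendsto_clip (y : ℝ) : Tendsto (fun n : ℕ => clip n y) atTop (𝓝 y) :=
  tendsto_atTop_of_eventually_const fun _ hn =>
    clip_of_abs_le ((Nat.le_ceil |y|).trans (Nat.cast_le.2 hn))

section CondIndep

variable {Ω : Type*} {m m0 : MeasurableSpace Ω} {P : Measure Ω}

theorem CondIndepBdd.comp {α β α' β' : Type*} [MeasurableSpace α] [MeasurableSpace β]
    [MeasurableSpace α'] [MeasurableSpace β'] {U : Ω → α} {V : Ω → β}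
    (h : CondIndepBdd P m U V) {φ : α → α'} {χ : β → β'} (hφ : Measurable φ)
    (hχ : Measurable χ) : CondIndepBdd P m (fun ω => φ (U ω)) (fun ω => χ (V ω)) :=
  fun f hf ⟨C, hC⟩ g hg ⟨C', hC'⟩ =>
    h (f ∘ φ) (hf.comp hφ) ⟨C, fun _ => hC _⟩ (g ∘ χ) (hg.comp hχ) ⟨C', fun _ => hC' _⟩

variable {Y D G : Ω → ℝ} {C : ℝ}

theorem tendsto_integral_mul_clip_mul {c : Ω → ℝ} (hc : AEStronglyMeasurable c P)
    (hcC : ∀ᵐ ω ∂P, |c ω| ≤ C) (hY : AEMeasurable Y P) (hG : AEStronglyMeasurable G P)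
    (hYG : Integrable (fun ω => Y ω * G ω) P) :
    Tendsto (fun n : ℕ => ∫ ω, c ω * clip n (Y ω) * G ω ∂P) atTop
      (𝓝 (∫ ω, c ω * Y ω * G ω ∂P)) := by
  refine tendsto_integral_of_dominated_convergence (fun ω => C * ‖Y ω * G ω‖)
    (fun n => (hc.mul ((measurable_clip n).comp_aemeasurable hY).aestronglyMeasurable).mul hG)
    (hYG.norm.const_mul C) (fun n => hcC.mono fun ω hω => ?_)
    (.of_forall fun ω => ((tendsto_clip (Y ω)).const_mul (c ω)).mul_const (G ω))
  simp only [Real.norm_eq_abs, abs_mul]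
  have hclip := abs_clip_le (Nat.cast_nonneg n) (Y ω)
  have hC : 0 ≤ C := (abs_nonneg _).trans hω
  calc |c ω| * |clip n (Y ω)| * |G ω| ≤ C * |Y ω| * |G ω| := by gcongr
    _ = C * (|Y ω| * |G ω|) := mul_assoc _ _ _

variable [IsFiniteMeasure P]

theorem integral_mul_comp_mul_eq_of_condIndepBdd (hm : m ≤ m0) (hind : CondIndepBdd P m Y D)
    (hY : AEMeasurable Y P) (hD : Measurable D) (hDC : ∀ ω, |D ω| ≤ C) {f : ℝ → ℝ}
    (hf : Measurable f) (hfb : Bdd f) (hG : StronglyMeasurable[m] G) (hGi : Integrable G P) :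
    ∫ ω, D ω * f (Y ω) * G ω ∂P = ∫ ω, (P[D|m]) ω * f (Y ω) * G ω ∂P := by
  obtain ⟨Cf, hCf⟩ := hfb
  have hfY : AEStronglyMeasurable (fun ω => f (Y ω)) P :=
    (hf.comp_aemeasurable hY).aestronglyMeasurable
  have hfYi : Integrable (fun ω => f (Y ω)) P :=
    (integrable_const Cf).mono' hfY (.of_forall fun ω => hCf _)
  have hfYD : Integrable (fun ω => f (Y ω) * D ω) P :=
    hfYi.mul_bdd hD.aestronglyMeasurable (.of_forall hDC)
  have hcond : ∀ᵐ ω ∂P, |(P[D|m]) ω| ≤ C :=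
    ae_bdd_abs_condExp_of_ae_bdd_abs (.of_forall hDC)
  -- `D` is bounded, so `clip C ∘ D = D` is itself an admissible test function.
  have hfac := hind f hf ⟨Cf, hCf⟩ (clip C) (measurable_clip C) ⟨|C|, abs_clip_le_abs_left C⟩
  simp only [fun ω => clip_of_abs_le (hDC ω)] at hfac
  calc ∫ ω, D ω * f (Y ω) * G ω ∂P = ∫ ω, G ω * (f (Y ω) * D ω) ∂P := by
        congr 1; ext ω; ring
    _ = ∫ ω, G ω * (P[fun ω => f (Y ω) * D ω|m]) ω ∂P :=
        integral_mul_condExp hm hG hfYD (hGi.mul_bdd hfYD.1 (.of_forall fun ω => by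
          rw [Real.norm_eq_abs, abs_mul]
          exact mul_le_mul (hCf _) (hDC ω) (abs_nonneg _) ((abs_nonneg _).trans (hCf 0))))
    _ = ∫ ω, (G ω * (P[D|m]) ω) * (P[fun ω => f (Y ω)|m]) ω ∂P :=
        integral_congr_ae (hfac.mono fun ω hω => by simp only at hω ⊢; rw [hω]; ring)
    _ = ∫ ω, (G ω * (P[D|m]) ω) * f (Y ω) ∂P :=
        (integral_mul_condExp hm (hG.mul stronglyMeasurable_condExp) hfYi
          ((hGi.mul_bdd integrable_condExp.aestronglyMeasurable hcond).mul_bdd hfY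
            (.of_forall fun ω => hCf _))).symm
    _ = ∫ ω, (P[D|m]) ω * f (Y ω) * G ω ∂P := by
        congr 1; ext ω; ring

theorem integral_mul_mul_eq_of_condIndepBdd (hm : m ≤ m0) (hind : CondIndepBdd P m Y D)
    (hD : Measurable D) (hDC : ∀ ω, |D ω| ≤ C) (hY : Integrable Y P)
    (hG : StronglyMeasurable[m] G) (hGi : Integrable G P)
    (hYG : Integrable (fun ω => Y ω * G ω) P) :
    ∫ ω, D ω * Y ω * G ω ∂P = ∫ ω, (P[D|m]) ω * (P[Y|m]) ω * G ω ∂P := by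
  have hcond : ∀ᵐ ω ∂P, |(P[D|m]) ω| ≤ C :=
    ae_bdd_abs_condExp_of_ae_bdd_abs (.of_forall hDC)
  have hGm : AEStronglyMeasurable G P := hGi.aestronglyMeasurable
  have hlim := tendsto_integral_mul_clip_mul hD.aestronglyMeasurable (.of_forall hDC)
    hY.aemeasurable hGm hYG
  have hlim' := tendsto_integral_mul_clip_mul integrable_condExp.aestronglyMeasurable hcond
    hY.aemeasurable hGm hYG
  simp only [fun n : ℕ => integral_mul_comp_mul_eq_of_condIndepBdd hm hind hY.aemeasurable hD
    hDC (measurable_clip n) ⟨|(n : ℝ)|, abs_clip_le_abs_left n⟩ hG hGi] at hlim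
  have hPYG : Integrable (fun ω => (P[D|m]) ω * G ω * Y ω) P :=
    (hYG.bdd_mul integrable_condExp.aestronglyMeasurable hcond).congr
      (.of_forall fun ω => by simp only; ring)
  calc ∫ ω, D ω * Y ω * G ω ∂P = ∫ ω, (P[D|m]) ω * Y ω * G ω ∂P := tendsto_nhds_unique hlim hlim'
    _ = ∫ ω, (P[D|m]) ω * G ω * Y ω ∂P := by congr 1; ext ω; ring
    _ = ∫ ω, (P[D|m]) ω * G ω * (P[Y|m]) ω ∂P :=
        integral_mul_condExp hm (stronglyMeasurable_condExp.mul hG) hY hPYG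
    _ = ∫ ω, (P[D|m]) ω * (P[Y|m]) ω * G ω ∂P := by congr 1; ext ω; ring

theorem integral_mul_sub_condExp_mul_eq_zero (hm : m ≤ m0) (hind : CondIndepBdd P m Y D)
    (hD : Measurable D) (hDC : ∀ ω, |D ω| ≤ C) (hY : MemLp Y 2 P)
    (hG : StronglyMeasurable[m] G) (hG2 : MemLp G 2 P) :
    ∫ ω, D ω * (Y ω - (P[Y|m]) ω) * G ω ∂P = 0 := by
  have hE2 : MemLp (P[Y|m]) 2 P := hY.condExp one_le_two
  have hDi : Integrable D P :=
    (integrable_const C).mono' hD.aestronglyMeasurable (.of_forall hDC)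
  have hEGD : Integrable (fun ω => (P[Y|m]) ω * G ω * D ω) P :=
    (hE2.integrable_mul hG2).mul_bdd hD.aestronglyMeasurable (.of_forall hDC)
  have hDY : ∫ ω, D ω * Y ω * G ω ∂P = ∫ ω, (P[D|m]) ω * (P[Y|m]) ω * G ω ∂P :=
    integral_mul_mul_eq_of_condIndepBdd hm hind hD hDC (hY.integrable one_le_two) hG
      (hG2.integrable one_le_two) (hY.integrable_mul hG2)
  have hDE : ∫ ω, (P[Y|m]) ω * G ω * D ω ∂P = ∫ ω, (P[Y|m]) ω * G ω * (P[D|m]) ω ∂P :=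
    integral_mul_condExp hm (stronglyMeasurable_condExp.mul hG) hDi hEGD
  calc ∫ ω, D ω * (Y ω - (P[Y|m]) ω) * G ω ∂P
        = ∫ ω, D ω * Y ω * G ω ∂P - ∫ ω, (P[Y|m]) ω * G ω * D ω ∂P := by
          rw [← integral_sub ((hY.integrable_mul hG2).bdd_mul hD.aestronglyMeasurable
            (.of_forall hDC) |>.congr (.of_forall fun ω => by simp only [Pi.mul_apply]; ring))
            hEGD]
          congr 1; ext ω; ring
    _ = 0 := by rw [hDY, hDE, sub_eq_zero]; congr 1; ext ω; ring

end CondIndep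

/-- One arm of a binary treatment `T` with propensity `e`: the treated arm is `D = T, q = e`, the
control arm `D = 1 - T, q = 1 - e`; `Y` is the potential outcome under the arm. -/
structure TreatmentArm {Ω : Type*} (m : MeasurableSpace Ω) {m0 : MeasurableSpace Ω}
    (P : Measure Ω) (D q Y μ : Ω → ℝ) : Prop where
  le : m ≤ m0
  measurable_indicator : Measurable D
  indicator_eq_zero_or_one : ∀ ω, D ω = 0 ∨ D ω = 1
  measurable_propensity : Measurable[m] q
  propensity_ae_eq : q =ᵐ[P] P[D|m]
  overlap : ∃ ε > 0, ∀ᵐ ω ∂P, ε ≤ q ω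
  memLp_outcome : MemLp Y 2 P
  measurable_regression : Measurable[m] μ
  regression_ae_eq : μ =ᵐ[P] P[Y|m]
  condIndepBdd : CondIndepBdd P m Y D

section TreatmentArm

variable {Ω : Type*} {m m0 : MeasurableSpace Ω} {P : Measure Ω}

def ipw (D q Z : Ω → ℝ) : Ω → ℝ := fun ω => D ω / q ω * Z ω

namespace TreatmentArm

variable {D q Y μ : Ω → ℝ}

theorem abs_indicator_le_one (h : TreatmentArm m P D q Y μ) (ω : Ω) : |D ω| ≤ 1 := by
  rcases h.indicator_eq_zero_or_one ω with hω | hω <;> simp [hω]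

theorem memLp_top_div_propensity (h : TreatmentArm m P D q Y μ) {a : Ω → ℝ}
    (ha : AEStronglyMeasurable a P) (hab : ∀ᵐ ω ∂P, |a ω| ≤ 1) :
    MemLp (fun ω => a ω / q ω) ∞ P := by
  obtain ⟨ε, hε, hεq⟩ := h.overlap
  refine memLp_top_of_bound
    (ha.div₀ (h.measurable_propensity.mono h.le le_rfl).aestronglyMeasurable) (1 / ε) ?_
  filter_upwards [hab, hεq] with ω hω hqω
  rw [Real.norm_eq_abs, abs_div, abs_of_pos (hε.trans_le hqω)]
  exact div_le_div₀ zero_le_one hω hε hqω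

theorem memLp_ipw (h : TreatmentArm m P D q Y μ) {p : ℝ≥0∞} {Z : Ω → ℝ} (hZ : MemLp Z p P) :
    MemLp (ipw D q Z) p P :=
  hZ.mul' (h.memLp_top_div_propensity h.measurable_indicator.aestronglyMeasurable
    (.of_forall h.abs_indicator_le_one))

theorem memLp_div_propensity (h : TreatmentArm m P D q Y μ) {p : ℝ≥0∞} {Z : Ω → ℝ}
    (hZ : MemLp Z p P) : MemLp (fun ω => Z ω / q ω) p P :=
  (hZ.mul' (h.memLp_top_div_propensity (a := fun _ => 1) aestronglyMeasurable_const
    (.of_forall fun _ => by norm_num))).ae_eq (.of_forall fun ω => by ring)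

theorem memLp_regression (h : TreatmentArm m P D q Y μ) : MemLp μ 2 P :=
  (h.memLp_outcome.condExp one_le_two).ae_eq h.regression_ae_eq.symm

theorem integral_regression [IsFiniteMeasure P] (h : TreatmentArm m P D q Y μ) :
    ∫ ω, μ ω ∂P = ∫ ω, Y ω ∂P :=
  (integral_congr_ae h.regression_ae_eq).trans (integral_condExp h.le)

theorem ae_propensity_pos (h : TreatmentArm m P D q Y μ) : ∀ᵐ ω ∂P, 0 < q ω := by
  obtain ⟨ε, hε, hεq⟩ := h.overlap
  exact hεq.mono fun ω hω => hε.trans_le hω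

theorem integrable_ipw (h : TreatmentArm m P D q Y μ) {Z : Ω → ℝ} (hZ : Integrable Z P) :
    Integrable (ipw D q Z) P :=
  memLp_one_iff_integrable.1 (h.memLp_ipw (memLp_one_iff_integrable.2 hZ))

theorem integrable_regression_sq_div (h : TreatmentArm m P D q Y μ) :
    Integrable (fun ω => μ ω ^ 2 / q ω) P :=
  memLp_one_iff_integrable.1
    (h.memLp_div_propensity (memLp_one_iff_integrable.2 h.memLp_regression.integrable_sq))

theorem integrable_indicator [IsFiniteMeasure P] (h : TreatmentArm m P D q Y μ) :
    Integrable D P :=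
  (integrable_const 1).mono' h.measurable_indicator.aestronglyMeasurable
    (.of_forall h.abs_indicator_le_one)

theorem compl [IsFiniteMeasure P] (h : TreatmentArm m P D q Y μ)
    (hq : ∃ ε > 0, ∀ᵐ ω ∂P, ε ≤ 1 - q ω) :
    TreatmentArm m P (fun ω => 1 - D ω) (fun ω => 1 - q ω) Y μ where
  le := h.le
  measurable_indicator := measurable_const.sub h.measurable_indicator
  indicator_eq_zero_or_one ω := by
    rcases h.indicator_eq_zero_or_one ω with hω | hω <;> simp [hω]
  measurable_propensity := measurable_const.sub h.measurable_propensity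
  propensity_ae_eq := by
    filter_upwards [h.propensity_ae_eq, condExp_sub (integrable_const 1) h.integrable_indicator m]
      with ω hω hsub
    simp only [Pi.sub_apply] at hsub
    rw [show (fun ω => 1 - D ω) = (fun _ => (1 : ℝ)) - D from rfl, hsub, hω,
      condExp_const h.le]
  overlap := hq
  memLp_outcome := h.memLp_outcome
  measurable_regression := h.measurable_regression
  regression_ae_eq := h.regression_ae_eq
  condIndepBdd := h.condIndepBdd.comp measurable_id (measurable_const.sub measurable_id)

theorem integral_ipw_residual_mul_eq_zero [IsFiniteMeasure P] (h : TreatmentArm m P D q Y μ)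
    {H : Ω → ℝ} (hH : Measurable[m] H) (hH2 : MemLp H 2 P) :
    ∫ ω, ipw D q (Y - μ) ω * H ω ∂P = 0 := by
  rw [← integral_mul_sub_condExp_mul_eq_zero h.le h.condIndepBdd h.measurable_indicator
    h.abs_indicator_le_one h.memLp_outcome (hH.div h.measurable_propensity).stronglyMeasurable
    (h.memLp_div_propensity hH2)]
  refine integral_congr_ae (h.regression_ae_eq.mono fun ω hω => ?_)
  simp only [ipw, Pi.sub_apply, Pi.div_apply, hω]
  ring

theorem integral_ipw [IsFiniteMeasure P] (h : TreatmentArm m P D q Y μ) {H : Ω → ℝ}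
    (hH : Measurable[m] H) (hHi : Integrable H P) : ∫ ω, ipw D q H ω ∂P = ∫ ω, H ω ∂P := by
  have hHq : Integrable (fun ω => H ω / q ω) P :=
    memLp_one_iff_integrable.1 (h.memLp_div_propensity (memLp_one_iff_integrable.2 hHi))
  calc ∫ ω, ipw D q H ω ∂P = ∫ ω, H ω / q ω * D ω ∂P := by
        congr 1; ext ω; simp only [ipw]; ring
    _ = ∫ ω, H ω / q ω * (P[D|m]) ω ∂P :=
        integral_mul_condExp h.le (hH.div h.measurable_propensity).stronglyMeasurable
          h.integrable_indicator (hHq.mul_bdd h.measurable_indicator.aestronglyMeasurable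
            (.of_forall h.abs_indicator_le_one))
    _ = ∫ ω, H ω ∂P := integral_congr_ae <| (h.propensity_ae_eq.and h.ae_propensity_pos).mono
        fun ω ⟨hω, hpos⟩ => by simp only [← hω]; field_simp

end TreatmentArm

variable {D1 q1 Y1 μ1 D0 q0 Y0 μ0 : Ω → ℝ}

theorem memLp_ipw_residual_sub (h1 : TreatmentArm m P D1 q1 Y1 μ1)
    (h0 : TreatmentArm m P D0 q0 Y0 μ0) :
    MemLp (fun ω => ipw D1 q1 (Y1 - μ1) ω - ipw D0 q0 (Y0 - μ0) ω) 2 P :=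
  (h1.memLp_ipw (h1.memLp_outcome.sub h1.memLp_regression)).sub
    (h0.memLp_ipw (h0.memLp_outcome.sub h0.memLp_regression))

theorem integral_ipw_residual_sub_mul_eq_zero [IsFiniteMeasure P]
    (h1 : TreatmentArm m P D1 q1 Y1 μ1) (h0 : TreatmentArm m P D0 q0 Y0 μ0) {H : Ω → ℝ}
    (hH : Measurable[m] H) (hH2 : MemLp H 2 P) :
    ∫ ω, (ipw D1 q1 (Y1 - μ1) ω - ipw D0 q0 (Y0 - μ0) ω) * H ω ∂P = 0 := by
  simp only [sub_mul]
  rw [integral_sub, h1.integral_ipw_residual_mul_eq_zero hH hH2,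
    h0.integral_ipw_residual_mul_eq_zero hH hH2, sub_zero]
  · exact (h1.memLp_ipw (h1.memLp_outcome.sub h1.memLp_regression)).integrable_mul hH2
  · exact (h0.memLp_ipw (h0.memLp_outcome.sub h0.memLp_regression)).integrable_mul hH2

theorem ipw_sub_mul_ipw_sub {ω : Ω} (hD1 : D1 ω = 0 ∨ D1 ω = 1) (hD0 : D0 ω = 0 ∨ D0 ω = 1)
    (hD : D1 ω * D0 ω = 0) (Z1 Z0 Z1' Z0' : Ω → ℝ) :
    (ipw D1 q1 Z1 ω - ipw D0 q0 Z0 ω) * (ipw D1 q1 Z1' ω - ipw D0 q0 Z0' ω)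
      = ipw D1 q1 Z1 ω * (Z1' ω / q1 ω) + ipw D0 q0 Z0 ω * (Z0' ω / q0 ω) := by
  rcases hD1 with h | h <;> rcases hD0 with h' | h' <;> simp only [ipw, h, h'] at hD ⊢ <;>
    first | ring1 | norm_num at hD

theorem integral_ipw_residual_sub_mul_ipw_sub_eq_zero [IsFiniteMeasure P]
    (h1 : TreatmentArm m P D1 q1 Y1 μ1) (h0 : TreatmentArm m P D0 q0 Y0 μ0)
    (hD : ∀ ω, D1 ω * D0 ω = 0) :
    ∫ ω, (ipw D1 q1 (Y1 - μ1) ω - ipw D0 q0 (Y0 - μ0) ω) * (ipw D1 q1 μ1 ω - ipw D0 q0 μ0 ω) ∂P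
      = 0 := by
  have hR1 := h1.memLp_ipw (h1.memLp_outcome.sub h1.memLp_regression)
  have hR0 := h0.memLp_ipw (h0.memLp_outcome.sub h0.memLp_regression)
  have hH1 := h1.memLp_div_propensity h1.memLp_regression
  have hH0 := h0.memLp_div_propensity h0.memLp_regression
  simp only [ipw_sub_mul_ipw_sub (h1.indicator_eq_zero_or_one _) (h0.indicator_eq_zero_or_one _)
    (hD _)]
  rw [integral_add (f := fun ω => ipw D1 q1 (Y1 - μ1) ω * (μ1 ω / q1 ω))
      (g := fun ω => ipw D0 q0 (Y0 - μ0) ω * (μ0 ω / q0 ω)) (hR1.integrable_mul hH1)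
      (hR0.integrable_mul hH0),
    h1.integral_ipw_residual_mul_eq_zero (H := fun ω => μ1 ω / q1 ω)
      (h1.measurable_regression.div h1.measurable_propensity) hH1,
    h0.integral_ipw_residual_mul_eq_zero (H := fun ω => μ0 ω / q0 ω)
      (h0.measurable_regression.div h0.measurable_propensity) hH0,
    add_zero]

theorem integral_sq_ipw_sub [IsFiniteMeasure P]
    (h1 : TreatmentArm m P D1 q1 Y1 μ1) (h0 : TreatmentArm m P D0 q0 Y0 μ0)
    (hD : ∀ ω, D1 ω * D0 ω = 0) :
    ∫ ω, (ipw D1 q1 μ1 ω - ipw D0 q0 μ0 ω) ^ 2 ∂P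
      = ∫ ω, μ1 ω ^ 2 / q1 ω ∂P + ∫ ω, μ0 ω ^ 2 / q0 ω ∂P := by
  have hH1 := h1.integrable_regression_sq_div
  have hH0 := h0.integrable_regression_sq_div
  rw [← h1.integral_ipw (H := fun ω => μ1 ω ^ 2 / q1 ω)
      ((h1.measurable_regression.pow_const 2).div h1.measurable_propensity) hH1,
    ← h0.integral_ipw (H := fun ω => μ0 ω ^ 2 / q0 ω)
      ((h0.measurable_regression.pow_const 2).div h0.measurable_propensity) hH0,
    ← integral_add (h1.integrable_ipw hH1) (h0.integrable_ipw hH0)]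
  congr 1; ext ω
  rw [sq, ipw_sub_mul_ipw_sub (h1.indicator_eq_zero_or_one _) (h0.indicator_eq_zero_or_one _)
    (hD _)]
  simp only [ipw]; ring

theorem integral_ipw_sub [IsFiniteMeasure P] (h1 : TreatmentArm m P D1 q1 Y1 μ1)
    (h0 : TreatmentArm m P D0 q0 Y0 μ0) :
    ∫ ω, (ipw D1 q1 Y1 ω - ipw D0 q0 Y0 ω) ∂P = ∫ ω, Y1 ω ∂P - ∫ ω, Y0 ω ∂P := by
  have hR := memLp_ipw_residual_sub h1 h0
  have hμ1 := h1.memLp_regression.integrable one_le_two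
  have hμ0 := h0.memLp_regression.integrable one_le_two
  have hM1 := h1.integrable_ipw hμ1
  have hM0 := h0.integrable_ipw hμ0
  calc ∫ ω, (ipw D1 q1 Y1 ω - ipw D0 q0 Y0 ω) ∂P
      = ∫ ω, ((ipw D1 q1 (Y1 - μ1) ω - ipw D0 q0 (Y0 - μ0) ω) * 1
          + (ipw D1 q1 μ1 ω - ipw D0 q0 μ0 ω)) ∂P := by
        congr 1; ext ω; simp only [ipw, Pi.sub_apply]; ring
    _ = ∫ ω, ipw D1 q1 μ1 ω ∂P - ∫ ω, ipw D0 q0 μ0 ω ∂P := by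
        rw [integral_add (f := fun ω => (ipw D1 q1 (Y1 - μ1) ω - ipw D0 q0 (Y0 - μ0) ω) * 1)
            (g := fun ω => ipw D1 q1 μ1 ω - ipw D0 q0 μ0 ω)
            ((hR.integrable one_le_two).mul_const 1) (hM1.sub hM0),
          integral_ipw_residual_sub_mul_eq_zero h1 h0 measurable_const (memLp_const 1), zero_add,
          integral_sub hM1 hM0]
    _ = ∫ ω, Y1 ω ∂P - ∫ ω, Y0 ω ∂P := by
        rw [h1.integral_ipw h1.measurable_regression hμ1, h1.integral_regression,
          h0.integral_ipw h0.measurable_regression hμ0, h0.integral_regression]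

theorem integral_sq_aipw_eq_var_ipw_sub [IsProbabilityMeasure P]
    (h1 : TreatmentArm m P D1 q1 Y1 μ1) (h0 : TreatmentArm m P D0 q0 Y0 μ0)
    (hD : ∀ ω, D1 ω * D0 ω = 0) :
    ∫ ω, (μ1 ω - μ0 ω + ipw D1 q1 (Y1 - μ1) ω - ipw D0 q0 (Y0 - μ0) ω
        - (∫ ω', Y1 ω' ∂P - ∫ ω', Y0 ω' ∂P)) ^ 2 ∂P
      = Var P (fun ω => ipw D1 q1 Y1 ω - ipw D0 q0 Y0 ω)
        - ∫ ω, (μ1 ω ^ 2 / q1 ω + μ0 ω ^ 2 / q0 ω - (μ1 ω - μ0 ω) ^ 2) ∂P := by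
  set δ := ∫ ω', Y1 ω' ∂P - ∫ ω', Y0 ω' ∂P
  have hB := memLp_ipw_residual_sub h1 h0
  have hM : MemLp (fun ω => ipw D1 q1 μ1 ω - ipw D0 q0 μ0 ω) 2 P :=
    (h1.memLp_ipw h1.memLp_regression).sub (h0.memLp_ipw h0.memLp_regression)
  have hC : MemLp (fun ω => μ1 ω - μ0 ω) 2 P := h1.memLp_regression.sub h0.memLp_regression
  have hCδ : MemLp (fun ω => μ1 ω - μ0 ω - δ) 2 P := hC.sub (memLp_const δ)
  have hψ : ∫ ω, (μ1 ω - μ0 ω + ipw D1 q1 (Y1 - μ1) ω - ipw D0 q0 (Y0 - μ0) ω - δ) ^ 2 ∂P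
      = ∫ ω, (ipw D1 q1 (Y1 - μ1) ω - ipw D0 q0 (Y0 - μ0) ω) ^ 2 ∂P
        + ∫ ω, (μ1 ω - μ0 ω - δ) ^ 2 ∂P := by
    rw [← integral_add_sq_of_integral_mul_eq_zero hB hCδ (integral_ipw_residual_sub_mul_eq_zero
      h1 h0 ((h1.measurable_regression.sub h0.measurable_regression).sub measurable_const) hCδ)]
    congr 1; ext ω; ring
  have hW : ∫ ω, (ipw D1 q1 Y1 ω - ipw D0 q0 Y0 ω) ^ 2 ∂P
      = ∫ ω, (ipw D1 q1 (Y1 - μ1) ω - ipw D0 q0 (Y0 - μ0) ω) ^ 2 ∂P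
        + ∫ ω, (ipw D1 q1 μ1 ω - ipw D0 q0 μ0 ω) ^ 2 ∂P := by
    rw [← integral_add_sq_of_integral_mul_eq_zero hB hM
      (integral_ipw_residual_sub_mul_ipw_sub_eq_zero h1 h0 hD)]
    congr 1; ext ω; simp only [ipw, Pi.sub_apply]; ring
  have hC2 := integral_sq_eq_integral_sub_sq_add_sq hC (c := δ) (by
    rw [integral_sub (h1.memLp_regression.integrable one_le_two)
      (h0.memLp_regression.integrable one_le_two), h1.integral_regression,
      h0.integral_regression])
  rw [Var, integral_ipw_sub h1 h0, hW, integral_sub, integral_add, integral_sq_ipw_sub h1 h0 hD,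
    hψ, hC2]
  · ring
  · exact h1.integrable_regression_sq_div
  · exact h0.integrable_regression_sq_div
  · exact h1.integrable_regression_sq_div.add h0.integrable_regression_sq_div
  · exact hC.integrable_sq

end TreatmentArm

theorem sq_sqrt_mul_add_sqrt_mul {p : ℝ} (hp0 : 0 < p) (hp1 : p < 1) (a b : ℝ) :
    (Real.sqrt ((1 - p) / p) * a + Real.sqrt (p / (1 - p)) * b) ^ 2
      = a ^ 2 / p + b ^ 2 / (1 - p) - (a - b) ^ 2 := by
  have hq : 0 < 1 - p := sub_pos.2 hp1
  have hprod : Real.sqrt ((1 - p) / p) * Real.sqrt (p / (1 - p)) = 1 := by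
    rw [← Real.sqrt_mul (div_nonneg hq.le hp0.le), div_mul_div_comm, mul_comm (1 - p) p,
      div_self (by positivity), Real.sqrt_one]
  calc (Real.sqrt ((1 - p) / p) * a + Real.sqrt (p / (1 - p)) * b) ^ 2
      = Real.sqrt ((1 - p) / p) ^ 2 * a ^ 2 + Real.sqrt (p / (1 - p)) ^ 2 * b ^ 2
        + 2 * (Real.sqrt ((1 - p) / p) * Real.sqrt (p / (1 - p))) * a * b := by ring
    _ = a ^ 2 / p + b ^ 2 / (1 - p) - (a - b) ^ 2 := by
      rw [Real.sq_sqrt (div_nonneg hq.le hp0.le), Real.sq_sqrt (div_nonneg hp0.le hq.le), hprod]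
      field_simp
      ring

end Surrogate

theorem statement10_general
    {Ω 𝒳 𝒮 : Type*} [MeasurableSpace Ω] [MeasurableSpace 𝒳] [MeasurableSpace 𝒮]
    (P : Measure Ω) [IsProbabilityMeasure P]
    (X : Ω → 𝒳) (T : Ω → ℝ) (S0 S1 : Ω → 𝒮) (Y0 Y1 : Ω → ℝ)
    (hX : Measurable X) (hT : Measurable T)
    (hT01 : ∀ ω, T ω = 0 ∨ T ω = 1)
    -- the treatment propensity e* (note that E[T|σ(X)] = P(T=1|σ(X)))
    (e : 𝒳 → ℝ) (he : Measurable e)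
    (heSpec : (fun ω => e (X ω)) =ᵐ[P] P[T|mX X])
    -- Assumption 1(i)
    (h1i : ∀ t : ℝ, t = 0 ∨ t = 1 →
      CondIndepBdd P (mX X) (fun ω => (pot Y0 Y1 t ω, pot S0 S1 t ω)) T)
    -- strict overlap for e*
    (ε : ℝ) (hε0 : 0 < ε)
    (h2e : ∀ᵐ ω ∂P, ε ≤ e (X ω) ∧ e (X ω) ≤ 1 - ε)
    -- the outcome regression μ*
    (mu : ℝ → 𝒳 → ℝ) (hmu : Measurable fun p : ℝ × 𝒳 => mu p.1 p.2)
    (hmuSpec : ∀ t : ℝ, t = 0 ∨ t = 1 →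
      (fun ω => mu t (X ω)) =ᵐ[P] P[pot Y0 Y1 t|mX X])
    -- Y(0), Y(1) ∈ L²(P)
    (hY0L2 : MemLp Y0 2 P) (hY1L2 : MemLp Y1 2 P) :
    ∫ ω, (psiIV X T (obs T Y0 Y1) e mu ((∫ ω', Y1 ω' ∂P) - ∫ ω', Y0 ω' ∂P) ω) ^ 2 ∂P
      = Var P (fun ω =>
            (T ω / e (X ω) - (1 - T ω) / (1 - e (X ω))) * obs T Y0 Y1 ω)
        - ∫ ω, (Real.sqrt ((1 - e (X ω)) / e (X ω)) * mu 1 (X ω)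
              + Real.sqrt (e (X ω) / (1 - e (X ω))) * mu 0 (X ω)) ^ 2 ∂P := by
  have hXm : Measurable[mX X] X := comap_measurable X
  have arm : ∀ t : ℝ, t = 0 ∨ t = 1 →
      TreatmentArm (mX X) P T (fun ω => e (X ω)) (pot Y0 Y1 t) (fun ω => mu t (X ω)) :=
    fun t ht => ⟨hX.comap_le, hT, hT01, he.comp hXm, heSpec, ⟨ε, hε0, h2e.mono fun _ hω => hω.1⟩,
      by rcases ht with rfl | rfl <;> simpa [pot], hmu.comp (measurable_const.prodMk hXm),
      hmuSpec t ht, (h1i t ht).comp measurable_fst measurable_id⟩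
  have arm1 : TreatmentArm (mX X) P T (fun ω => e (X ω)) Y1 (fun ω => mu 1 (X ω)) := by
    simpa [pot] using arm 1 (Or.inr rfl)
  have arm0 := (show TreatmentArm (mX X) P T (fun ω => e (X ω)) Y0 (fun ω => mu 0 (X ω)) by
    simpa [pot] using arm 0 (Or.inl rfl)).compl ⟨ε, hε0, h2e.mono fun _ hω => by linarith [hω.2]⟩
  have key := integral_sq_aipw_eq_var_ipw_sub arm1 arm0 fun ω => by
    rcases hT01 ω with h | h <;> simp [h]
  have hsqrt : (fun ω => (Real.sqrt ((1 - e (X ω)) / e (X ω)) * mu 1 (X ω)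
        + Real.sqrt (e (X ω) / (1 - e (X ω))) * mu 0 (X ω)) ^ 2) =ᵐ[P] fun ω =>
      mu 1 (X ω) ^ 2 / e (X ω) + mu 0 (X ω) ^ 2 / (1 - e (X ω)) - (mu 1 (X ω) - mu 0 (X ω)) ^ 2 :=
    h2e.mono fun ω hω => sq_sqrt_mul_add_sqrt_mul (hε0.trans_le hω.1) (by linarith [hω.2]) _ _
  rw [integral_congr_ae hsqrt]
  convert key using 4 with ω ω
  · rcases hT01 ω with h | h <;> simp [psiIV, obs, ipw, h]
  · rcases hT01 ω with h | h <;> simp [obs, ipw, h]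

/-- Closed form of the efficiency lower bound with fully observed outcomes
(Corollary, Setting IV). -/
theorem statement10
    {Ω 𝒳 𝒮 : Type*} [MeasurableSpace Ω] [MeasurableSpace 𝒳] [MeasurableSpace 𝒮]
    [StandardBorelSpace 𝒳] [StandardBorelSpace 𝒮]
    (P : Measure Ω) [IsProbabilityMeasure P]
    (X : Ω → 𝒳) (T : Ω → ℝ) (S0 S1 : Ω → 𝒮) (Y0 Y1 : Ω → ℝ)
    (hX : Measurable X) (hT : Measurable T)
    (hS0 : Measurable S0) (hS1 : Measurable S1)
    (hY0 : Measurable Y0) (hY1 : Measurable Y1)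
    (hT01 : ∀ ω, T ω = 0 ∨ T ω = 1)
    -- the treatment propensity e* (note that E[T|σ(X)] = P(T=1|σ(X)))
    (e : 𝒳 → ℝ) (he : Measurable e) (heRange : ∀ x, e x ∈ Set.Icc (0 : ℝ) 1)
    (heSpec : (fun ω => e (X ω)) =ᵐ[P] P[T|mX X])
    -- Assumption 1(i)
    (h1i : ∀ t : ℝ, t = 0 ∨ t = 1 →
      CondIndepBdd P (mX X) (fun ω => (pot Y0 Y1 t ω, pot S0 S1 t ω)) T)
    -- strict overlap for e*
    (ε : ℝ) (hε0 : 0 < ε) (hε : ε < 1 / 2)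
    (h2e : ∀ᵐ ω ∂P, ε ≤ e (X ω) ∧ e (X ω) ≤ 1 - ε)
    -- the outcome regression μ*
    (mu : ℝ → 𝒳 → ℝ) (hmu : Measurable fun p : ℝ × 𝒳 => mu p.1 p.2)
    (hmuSpec : ∀ t : ℝ, t = 0 ∨ t = 1 →
      (fun ω => mu t (X ω)) =ᵐ[P] P[pot Y0 Y1 t|mX X])
    -- Y(0), Y(1) ∈ L²(P)
    (hY0L2 : MemLp Y0 2 P) (hY1L2 : MemLp Y1 2 P) :
    ∫ ω, (psiIV X T (obs T Y0 Y1) e mu ((∫ ω', Y1 ω' ∂P) - ∫ ω', Y0 ω' ∂P) ω) ^ 2 ∂P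
      = Var P (fun ω =>
            (T ω / e (X ω) - (1 - T ω) / (1 - e (X ω))) * obs T Y0 Y1 ω)
        - ∫ ω, (Real.sqrt ((1 - e (X ω)) / e (X ω)) * mu 1 (X ω)
              + Real.sqrt (e (X ω) / (1 - e (X ω))) * mu 0 (X ω)) ^ 2 ∂P :=
  statement10_general P X T S0 S1 Y0 Y1 hX hT hT01 e he heSpec h1i ε hε0 h2e mu hmu hmuSpec hY0L2
    hY1L2
end
end

section
/- Efficiency gains under MCAR (Proposition on the MCAR setting). Assume Assumption 1(i), ε ≤ e*(X) ≤ 1−ε a.s. for some ε ∈ (0,1/2), Y(0), Y(1) ∈ L²(P), and that R is independent of (X, T, S(0), S(1), Y(0), Y(1)); write p := P(R=1). Define: V_i := E[ ( (T/e*(X))·(Y − μ*(1,X)) − ((1−T)/(1−e*(X)))·(Y − μ*(0,X)) )² ] + E[ (μ*(1,X) − μ*(0,X) − δ*)² ]; V_ii := E[A²] + p·E[B²] + p·E[C²] and V_iii := E[A²], where A := (T/e*(X))·(Y − μ̃*(1,X,S)) − ((1−T)/(1−e*(X)))·(Y − μ̃*(0,X,S)), B := μ*(1,X) − μ*(0,X)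 − δ*, and C := (T/e*(X))·(μ̃*(1,X,S) − μ*(1,X)) − ((1−T)/(1−e*(X)))·(μ̃*(0,X,S) − μ*(0,X)). Then V_i − V_ii = (1−p)·( E[ (1/e*(X))·Var(μ̃*(1,X,S(1)) | σ(X)) + (1/(1−e*(X)))·Var(μ̃*(0,X,S(0)) | σ(X)) ] + E[B²] ) and V_ii − V_iii = p·( E[ (1/e*(X))·Var(μ̃*(1,X,S(1)) | σ(X)) + (1/(1−e*(X)))·Var(μ̃*(0,X,S(0)) | σ(X)) ] + E[B²] ). -/
/-!
Write each arm of the contrasts as a pair `(W, π)`, with `(T, e*)` for the treated arm and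
`(1 - T, 1 - e*)` for the control arm. Since `T (1 - T) = 0`, each of `E[A²]`, `E[C²]` and the
first term of `V_i` splits into a sum over the arms of terms `E[W/π(X)² · f(X, Y, S)²]`.
Assumption 1(i) lets us replace `W` by `π(X)` inside such an expectation. The push-forwards of
`W · P` and `π(X) · P` under `(X, Y, S)` agree on rectangles, so they are equal. This leaves
the weight `1/π(X)`, and in each arm:

* `Y - μ̃` is orthogonal to every σ(X, S)-measurable square-integrable function, so
  `E[(Y - μ)²/π] = E[(Y - μ̃)²/π] + E[(μ̃ - μ)²/π]`. This gives `V_i - E[B²] = E[A²] + E[C²]`;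
* `μ = E[μ̃ | X]` by the tower property, so `E[(μ̃ - μ)²/π] = E[Var(μ̃ | X)/π]`.
  This gives `E[C²] = V_S`.

Both claimed identities then follow by linear algebra in `p`.
-/

open MeasureTheory ProbabilityTheory Filter
open scoped ENNReal NNReal Topology

noncomputable section

open Surrogate


section ConditionalExpectation

variable {Ω : Type*} {m m₀ : MeasurableSpace Ω} {P : Measure[m₀] Ω} [IsFiniteMeasure P]

theorem integrable_of_forall_mem_Icc {f : Ω → ℝ} (hf : Measurable f)
    (h01 : ∀ ω, f ω ∈ Set.Icc (0 : ℝ) 1) : Integrable f P :=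
  .of_bound hf.aestronglyMeasurable 1 (ae_of_all _ fun ω => by
    simpa [abs_le] using ⟨(neg_nonpos.2 zero_le_one).trans (h01 ω).1, (h01 ω).2⟩)

theorem integral_mul_condExp_of_stronglyMeasurable (hm : m ≤ m₀) {φ Z : Ω → ℝ}
    (hφ : StronglyMeasurable[m] φ) (hZ : Integrable Z P)
    (hφZ : Integrable (fun ω => φ ω * Z ω) P) :
    ∫ ω, φ ω * Z ω ∂P = ∫ ω, φ ω * (P[Z|m]) ω ∂P :=
  calc ∫ ω, φ ω * Z ω ∂P = ∫ ω, (P[φ * Z|m]) ω ∂P := (integral_condExp hm).symm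
    _ = ∫ ω, φ ω * (P[Z|m]) ω ∂P :=
      integral_congr_ae (condExp_mul_of_stronglyMeasurable_left hφ hφZ hZ)

theorem integral_mul_sub_eq_zero_of_ae_eq_condExp (hm : m ≤ m₀) {φ Y Z : Ω → ℝ}
    (hφ : StronglyMeasurable[m] φ) (hφ2 : MemLp φ 2 P) (hY : MemLp Y 2 P)
    (hZ : Z =ᵐ[P] P[Y|m]) :
    ∫ ω, φ ω * (Y ω - Z ω) ∂P = 0 := by
  have hφY : Integrable (fun ω => φ ω * Y ω) P := hφ2.integrable_mul hY
  have hφZ : Integrable (fun ω => φ ω * Z ω) P :=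
    hφ2.integrable_mul ((hY.condExp one_le_two).ae_eq hZ.symm)
  simp_rw [mul_sub]
  rw [integral_sub hφY hφZ,
    integral_mul_condExp_of_stronglyMeasurable hm hφ (hY.integrable one_le_two) hφY]
  refine sub_eq_zero.2 (integral_congr_ae ?_)
  filter_upwards [hZ] with ω hω
  rw [hω]

theorem integral_mul_sq_sub_eq_integral_mul_condVar (hm : m ≤ m₀) {g Z M : Ω → ℝ} {c : ℝ}
    (hg : StronglyMeasurable[m] g) (hgc : ∀ᵐ ω ∂P, ‖g ω‖ ≤ c) (hZ : MemLp Z 2 P)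
    (hM : M =ᵐ[P] P[Z|m]) :
    ∫ ω, g ω * (Z ω - M ω) ^ 2 ∂P = ∫ ω, g ω * condVar P m Z ω ∂P := by
  have hsq : Integrable (fun ω => (Z ω - M ω) ^ 2) P :=
    (hZ.sub ((hZ.condExp one_le_two).ae_eq hM.symm)).integrable_sq
  have hres : (fun ω => (Z ω - M ω) ^ 2) =ᵐ[P] (Z - P[Z|m]) ^ 2 := by
    filter_upwards [hM] with ω hω
    simp [hω]
  rw [integral_mul_condExp_of_stronglyMeasurable hm hg hsq
    (hsq.bdd_mul (hg.mono hm).aestronglyMeasurable hgc)]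
  refine integral_congr_ae ?_
  filter_upwards [condExp_congr_ae hres, condVar_ae_eq_condExp_sq_sub_sq_condExp hm hZ]
    with ω h₁ h₂
  rw [h₁]
  exact congrArg (g ω * ·) h₂

theorem ae_eq_condExp_one_sub (hm : m ≤ m₀) {f g : Ω → ℝ} (hf : Integrable f P)
    (hg : g =ᵐ[P] P[f|m]) : (fun ω => 1 - g ω) =ᵐ[P] P[fun ω => 1 - f ω|m] := by
  filter_upwards [hg, condExp_sub (integrable_const 1) hf m] with ω h₁ h₂
  rw [h₁, show (fun ω => 1 - f ω) = (fun _ => (1 : ℝ)) - f from rfl, h₂, Pi.sub_apply,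
    condExp_const hm]

end ConditionalExpectation

namespace Surrogate

section

variable {Ω α : Type*}

@[simp]
theorem pot_one (a0 a1 : Ω → α) : pot a0 a1 1 = a1 := if_pos rfl

@[simp]
theorem pot_zero (a0 a1 : Ω → α) : pot a0 a1 0 = a0 := if_neg zero_ne_one

variable {𝒳 : Type*} [MeasurableSpace 𝒳] [MeasurableSpace α] {X : Ω → 𝒳} {V : Ω → α}

theorem measurable_mX : Measurable[mX X] X := comap_measurable X

theorem measurable_m2 : Measurable[m2 X V] fun ω => (X ω, V ω) := comap_measurable _

theorem mX_le_m2 : mX X ≤ m2 X V := (measurable_fst.comp measurable_m2).comap_le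

theorem mX_le [MeasurableSpace Ω] (hX : Measurable X) : mX X ≤ ‹MeasurableSpace Ω› :=
  hX.comap_le

theorem m2_le [MeasurableSpace Ω] (hX : Measurable X) (hV : Measurable V) :
    m2 X V ≤ ‹MeasurableSpace Ω› :=
  (hX.prodMk hV).comap_le

end

theorem CondIndepBdd.comp_right {Ω α β γ : Type*} {m : MeasurableSpace Ω}
    [MeasurableSpace Ω] [MeasurableSpace α] [MeasurableSpace β] [MeasurableSpace γ]
    {P : Measure Ω} {U : Ω → α} {V : Ω → β} (h : CondIndepBdd P m U V)
    {φ : β → γ} (hφ : Measurable φ) : CondIndepBdd P m U fun ω => φ (V ω) := by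
  rintro f hf hfb g hg ⟨C, hC⟩
  exact h f hf hfb (fun b => g (φ b)) (hg.comp hφ) ⟨C, fun b => hC (φ b)⟩

end Surrogate

section Transfer

variable {Ω 𝒳 α : Type*} [MeasurableSpace Ω] [MeasurableSpace 𝒳] [MeasurableSpace α]
  {P : Measure Ω} {X : Ω → 𝒳} {U : Ω → α} {W : Ω → ℝ} {π : 𝒳 → ℝ}

theorem integral_map_withDensity_ofReal {v : Ω → ℝ} (hv : Measurable v) (hv0 : ∀ ω, 0 ≤ v ω)
    {F : Ω → α} (hF : Measurable F) {h : α → ℝ} (hh : Measurable h) :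
    ∫ a, h a ∂((P.withDensity fun ω => ENNReal.ofReal (v ω)).map F)
      = ∫ ω, v ω * h (F ω) ∂P := by
  rw [integral_map hF.aemeasurable hh.aestronglyMeasurable,
    integral_withDensity_eq_integral_toReal_smul hv.ennreal_ofReal
      (ae_of_all _ fun _ => ENNReal.ofReal_lt_top)]
  simp [ENNReal.toReal_ofReal (hv0 _)]

theorem map_withDensity_ofReal_eq_of_forall_prod (hX : Measurable X) (hU : Measurable U)
    {v w : Ω → ℝ} (hv : Integrable v P) (hw : Integrable w P)
    (hv0 : ∀ ω, 0 ≤ v ω) (hw0 : ∀ ω, 0 ≤ w ω)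
    (hvw : ∀ A, MeasurableSet A → ∀ B, MeasurableSet B →
      ∫ ω in X ⁻¹' A ∩ U ⁻¹' B, v ω ∂P = ∫ ω in X ⁻¹' A ∩ U ⁻¹' B, w ω ∂P) :
    (P.withDensity fun ω => ENNReal.ofReal (v ω)).map (fun ω => (X ω, U ω))
      = (P.withDensity fun ω => ENNReal.ofReal (w ω)).map (fun ω => (X ω, U ω)) := by
  have hprod : ∀ {A B}, MeasurableSet A → MeasurableSet B → ∀ {f : Ω → ℝ}, Integrable f P →
      (∀ ω, 0 ≤ f ω) →
      (P.withDensity fun ω => ENNReal.ofReal (f ω)).map (fun ω => (X ω, U ω)) (A ×ˢ B)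
        = ENNReal.ofReal (∫ ω in X ⁻¹' A ∩ U ⁻¹' B, f ω ∂P) := by
    intro A B hA hB f hf hf0
    rw [Measure.map_apply (hX.prodMk hU) (hA.prod hB), Set.mk_preimage_prod,
      withDensity_apply _ ((hX hA).inter (hU hB)),
      ofReal_integral_eq_lintegral_ofReal hf.restrict (ae_of_all _ hf0)]
  have : IsFiniteMeasure
      ((P.withDensity fun ω => ENNReal.ofReal (v ω)).map (fun ω => (X ω, U ω))) := by
    refine ⟨?_⟩
    rw [← Set.univ_prod_univ, hprod MeasurableSet.univ MeasurableSet.univ hv hv0]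
    exact ENNReal.ofReal_lt_top
  refine ext_of_generate_finite _ generateFrom_prod.symm isPiSystem_prod ?_ ?_
  · rintro _ ⟨A, hA, B, hB, rfl⟩
    rw [hprod hA hB hv hv0, hprod hA hB hw hw0, hvw A hA B hB]
  · rw [← Set.univ_prod_univ, hprod MeasurableSet.univ MeasurableSet.univ hv hv0,
      hprod MeasurableSet.univ MeasurableSet.univ hw hw0,
      hvw _ MeasurableSet.univ _ MeasurableSet.univ]

variable [IsFiniteMeasure P]

theorem setIntegral_preimage_inter_eq_of_condIndepBdd (hX : Measurable X) (hU : Measurable U)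
    (hW : Measurable W) (hW01 : ∀ ω, W ω ∈ Set.Icc (0 : ℝ) 1) (hπ : Measurable π)
    (hπW : (fun ω => π (X ω)) =ᵐ[P] P[W|mX X]) (hCI : CondIndepBdd P (mX X) U W)
    {A : Set 𝒳} (hA : MeasurableSet A) {B : Set α} (hB : MeasurableSet B) :
    ∫ ω in X ⁻¹' A ∩ U ⁻¹' B, W ω ∂P = ∫ ω in X ⁻¹' A ∩ U ⁻¹' B, π (X ω) ∂P := by
  have hm := mX_le hX
  set f : α → ℝ := B.indicator fun _ => 1
  have hf : Measurable f := measurable_const.indicator hB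
  have hfb : ∀ a, ‖f a‖ ≤ 1 := fun a => by by_cases ha : a ∈ B <;> simp [f, ha]
  have hfU : Integrable (fun ω => f (U ω)) P :=
    .of_bound (hf.comp hU).aestronglyMeasurable 1 (ae_of_all _ fun _ => hfb _)
  have hπi : Integrable (fun ω => π (X ω)) P := integrable_condExp.congr hπW.symm
  have hfUπ : Integrable (fun ω => f (U ω) * π (X ω)) P :=
    hπi.bdd_mul (hf.comp hU).aestronglyMeasurable (ae_of_all _ fun _ => hfb _)
  have hπX : StronglyMeasurable[mX X] fun ω => π (X ω) :=
    (hπ.comp measurable_mX).stronglyMeasurable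
  have hfUW : Integrable (fun ω => f (U ω) * W ω) P :=
    (integrable_of_forall_mem_Icc hW hW01).bdd_mul (hf.comp hU).aestronglyMeasurable
      (ae_of_all _ fun _ => hfb _)
  -- `CondIndepBdd` only tests bounded functions of `W`; this one is the identity on `[0, 1]`.
  have hfW := hCI f hf ⟨1, hfb⟩ (fun t => max 0 (min t 1))
    (measurable_const.max (measurable_id.min measurable_const)) ⟨1, fun t => by simp [abs_le]⟩
  simp only [fun ω => min_eq_left (hW01 ω).2, fun ω => max_eq_right (hW01 ω).1] at hfW
  have hrect : ∀ v : Ω → ℝ,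
      ∫ ω in X ⁻¹' A ∩ U ⁻¹' B, v ω ∂P = ∫ ω in X ⁻¹' A, f (U ω) * v ω ∂P := fun v => by
    rw [← setIntegral_indicator (hU hB)]
    congr 1 with ω
    by_cases hω : U ω ∈ B <;> simp [f, hω]
  have hXA : MeasurableSet[mX X] (X ⁻¹' A) := ⟨A, hA, rfl⟩
  rw [hrect, hrect]
  calc ∫ ω in X ⁻¹' A, f (U ω) * W ω ∂P
      = ∫ ω in X ⁻¹' A, (P[fun ω => f (U ω) * W ω|mX X]) ω ∂P :=
        (setIntegral_condExp hm hfUW hXA).symm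
    _ = ∫ ω in X ⁻¹' A, (P[fun ω => f (U ω) * π (X ω)|mX X]) ω ∂P := by
        refine setIntegral_congr_ae (hm _ hXA) ?_
        filter_upwards [hfW, hπW, condExp_mul_of_stronglyMeasurable_right hπX hfUπ hfU]
          with ω h₁ h₂ h₃ _
        rw [h₁, show (fun ω => f (U ω) * π (X ω)) = (fun ω => f (U ω)) * fun ω => π (X ω)
          from rfl, h₃, Pi.mul_apply, h₂]
    _ = ∫ ω in X ⁻¹' A, f (U ω) * π (X ω) ∂P := setIntegral_condExp hm hfUπ hXA

theorem integral_mul_comp_eq_of_condIndepBdd (hX : Measurable X) (hU : Measurable U)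
    (hW : Measurable W) (hW01 : ∀ ω, W ω ∈ Set.Icc (0 : ℝ) 1) (hπ : Measurable π)
    (hπ0 : ∀ x, 0 ≤ π x) (hπW : (fun ω => π (X ω)) =ᵐ[P] P[W|mX X])
    (hCI : CondIndepBdd P (mX X) U W) {h : 𝒳 × α → ℝ} (hh : Measurable h) :
    ∫ ω, W ω * h (X ω, U ω) ∂P = ∫ ω, π (X ω) * h (X ω, U ω) ∂P := by
  rw [← integral_map_withDensity_ofReal hW (fun ω => (hW01 ω).1) (hX.prodMk hU) hh,
    ← integral_map_withDensity_ofReal (v := fun ω => π (X ω)) (hπ.comp hX) (fun _ => hπ0 _)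
      (hX.prodMk hU) hh,
    map_withDensity_ofReal_eq_of_forall_prod hX hU (integrable_of_forall_mem_Icc hW hW01)
      (integrable_condExp.congr hπW.symm) (fun ω => (hW01 ω).1) (fun _ => hπ0 _)
      fun _ hA _ hB =>
        setIntegral_preimage_inter_eq_of_condIndepBdd hX hU hW hW01 hπ hπW hCI hA hB]

end Transfer

namespace Surrogate

/-- One arm of the inverse-probability-weighted contrasts: `W` is the arm's indicator and `π`
its propensity (`W = T, π = e*` for the treated arm, `W = 1 - T, π = 1 - e*` for the control
arm), `(Y, S)` its potential outcome and surrogate, `mt` and `mu` its outcome regressions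
on `(X, S)` and on `X`. -/
structure IsTreatmentArm {Ω 𝒳 𝒮 : Type*} [MeasurableSpace Ω] [MeasurableSpace 𝒳]
    [MeasurableSpace 𝒮] (P : Measure Ω) (X : Ω → 𝒳) (W : Ω → ℝ) (π : 𝒳 → ℝ) (ε : ℝ)
    (Y : Ω → ℝ) (S : Ω → 𝒮) (mt : 𝒳 → 𝒮 → ℝ) (mu : 𝒳 → ℝ) : Prop where
  measurable_X : Measurable X
  measurable_W : Measurable W
  W_mem_Icc : ∀ ω, W ω ∈ Set.Icc (0 : ℝ) 1
  measurable_π : Measurable π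
  π_nonneg : ∀ x, 0 ≤ π x
  π_ae_eq : (fun ω => π (X ω)) =ᵐ[P] P[W|mX X]
  ε_pos : 0 < ε
  ε_le_π : ∀ᵐ ω ∂P, ε ≤ π (X ω)
  measurable_Y : Measurable Y
  measurable_S : Measurable S
  memLp_Y : MemLp Y 2 P
  condIndep : CondIndepBdd P (mX X) (fun ω => (Y ω, S ω)) W
  measurable_mt : Measurable (Function.uncurry mt)
  mt_ae_eq : (fun ω => mt (X ω) (S ω)) =ᵐ[P] P[Y|m2 X S]
  measurable_mu : Measurable mu
  mu_ae_eq : (fun ω => mu (X ω)) =ᵐ[P] P[Y|mX X]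

namespace IsTreatmentArm

variable {Ω 𝒳 𝒮 : Type*} [MeasurableSpace Ω] [MeasurableSpace 𝒳] [MeasurableSpace 𝒮]
  {P : Measure Ω} {X : Ω → 𝒳} {W : Ω → ℝ} {π : 𝒳 → ℝ} {ε : ℝ}
  {Y : Ω → ℝ} {S : Ω → 𝒮} {mt : 𝒳 → 𝒮 → ℝ} {mu : 𝒳 → ℝ}

theorem norm_inv_π_le (A : IsTreatmentArm P X W π ε Y S mt mu) :
    ∀ᵐ ω ∂P, ‖1 / π (X ω)‖ ≤ 1 / ε := by
  filter_upwards [A.ε_le_π] with ω hω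
  rw [Real.norm_of_nonneg (one_div_nonneg.2 (A.π_nonneg _))]
  exact one_div_le_one_div_of_le A.ε_pos hω

theorem integrable_weight_mul (A : IsTreatmentArm P X W π ε Y S mt mu) {q : Ω → ℝ}
    (hq : Integrable q P) : Integrable (fun ω => W ω / π (X ω) ^ 2 * q ω) P := by
  have := A.measurable_W
  have := A.measurable_π
  have := A.measurable_X
  refine hq.bdd_mul (c := 1 / ε ^ 2) (Measurable.aestronglyMeasurable (by fun_prop)) ?_
  filter_upwards [A.ε_le_π] with ω hω
  have hε := A.ε_pos
  rw [Real.norm_of_nonneg (div_nonneg (A.W_mem_Icc ω).1 (sq_nonneg _))]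
  exact div_le_div₀ zero_le_one (A.W_mem_Icc ω).2 (by positivity) (pow_le_pow_left₀ hε.le hω 2)

theorem integrable_weight_mul_sq (A : IsTreatmentArm P X W π ε Y S mt mu) {f : Ω → ℝ}
    (hf : MemLp f 2 P) : Integrable (fun ω => W ω / π (X ω) ^ 2 * f ω ^ 2) P :=
  A.integrable_weight_mul hf.integrable_sq

theorem memLp_mt (A : IsTreatmentArm P X W π ε Y S mt mu) :
    MemLp (fun ω => mt (X ω) (S ω)) 2 P :=
  (A.memLp_Y.condExp one_le_two).ae_eq A.mt_ae_eq.symm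

theorem memLp_mu (A : IsTreatmentArm P X W π ε Y S mt mu) : MemLp (fun ω => mu (X ω)) 2 P :=
  (A.memLp_Y.condExp one_le_two).ae_eq A.mu_ae_eq.symm

theorem integrable_inv_mul_condVar (A : IsTreatmentArm P X W π ε Y S mt mu) :
    Integrable (fun ω => 1 / π (X ω) * condVar P (mX X) (fun ω => mt (X ω) (S ω)) ω) P :=
  (integrable_condExp.sub (A.memLp_mt.condExp one_le_two).integrable_sq).bdd_mul
    (measurable_const.div (A.measurable_π.comp A.measurable_X)).aestronglyMeasurable
    A.norm_inv_π_le

variable [IsFiniteMeasure P]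

theorem mu_ae_eq_condExp_mt (A : IsTreatmentArm P X W π ε Y S mt mu) :
    (fun ω => mu (X ω)) =ᵐ[P] P[fun ω => mt (X ω) (S ω)|mX X] :=
  A.mu_ae_eq.trans <| (condExp_condExp_of_le mX_le_m2
    (m2_le A.measurable_X A.measurable_S)).symm.trans (condExp_congr_ae A.mt_ae_eq.symm)

theorem integral_weight_mul_eq (A : IsTreatmentArm P X W π ε Y S mt mu)
    {h : 𝒳 × ℝ × 𝒮 → ℝ} (hh : Measurable h) :
    ∫ ω, W ω / π (X ω) ^ 2 * h (X ω, Y ω, S ω) ∂P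
      = ∫ ω, 1 / π (X ω) * h (X ω, Y ω, S ω) ∂P := by
  have := A.measurable_π
  calc ∫ ω, W ω / π (X ω) ^ 2 * h (X ω, Y ω, S ω) ∂P
      = ∫ ω, W ω * (h (X ω, Y ω, S ω) / π (X ω) ^ 2) ∂P := by
        congr 1 with ω
        ring
    _ = ∫ ω, π (X ω) * (h (X ω, Y ω, S ω) / π (X ω) ^ 2) ∂P :=
        integral_mul_comp_eq_of_condIndepBdd A.measurable_X
          (A.measurable_Y.prodMk A.measurable_S) A.measurable_W A.W_mem_Icc A.measurable_π
          A.π_nonneg A.π_ae_eq A.condIndep (h := fun q => h q / π q.1 ^ 2) (by fun_prop)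
    _ = ∫ ω, 1 / π (X ω) * h (X ω, Y ω, S ω) ∂P := by
        refine integral_congr_ae ?_
        filter_upwards [A.ε_le_π] with ω hω
        have : π (X ω) ≠ 0 := (A.ε_pos.trans_le hω).ne'
        field_simp

theorem integral_cross_eq_zero (A : IsTreatmentArm P X W π ε Y S mt mu) :
    ∫ ω, W ω / π (X ω) ^ 2 * ((Y ω - mt (X ω) (S ω)) * (mt (X ω) (S ω) - mu (X ω))) ∂P
      = 0 := by
  have := A.measurable_mt
  have := A.measurable_mu
  have := A.measurable_π
  refine (A.integral_weight_mul_eq (h := fun q => (q.2.1 - mt q.1 q.2.2) *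
    (mt q.1 q.2.2 - mu q.1)) (by fun_prop)).trans ?_
  have hφ : StronglyMeasurable[m2 X S] fun ω => 1 / π (X ω) * (mt (X ω) (S ω) - mu (X ω)) :=
    (Measurable.comp (g := fun q : 𝒳 × 𝒮 => 1 / π q.1 * (mt q.1 q.2 - mu q.1)) (by fun_prop)
      measurable_m2).stronglyMeasurable
  have hφ2 : MemLp (fun ω => 1 / π (X ω) * (mt (X ω) (S ω) - mu (X ω))) 2 P :=
    (A.memLp_mt.sub A.memLp_mu).mul' (memLp_top_of_bound
      (measurable_const.div (A.measurable_π.comp A.measurable_X)).aestronglyMeasurable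
      (1 / ε) A.norm_inv_π_le)
  rw [← integral_mul_sub_eq_zero_of_ae_eq_condExp (m2_le A.measurable_X A.measurable_S) hφ hφ2
    A.memLp_Y A.mt_ae_eq]
  congr 1 with ω
  ring

theorem integral_weight_mul_sq_sub_mu (A : IsTreatmentArm P X W π ε Y S mt mu) :
    ∫ ω, W ω / π (X ω) ^ 2 * (Y ω - mu (X ω)) ^ 2 ∂P
      = ∫ ω, W ω / π (X ω) ^ 2 * (Y ω - mt (X ω) (S ω)) ^ 2 ∂P
        + ∫ ω, W ω / π (X ω) ^ 2 * (mt (X ω) (S ω) - mu (X ω)) ^ 2 ∂P := by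
  have hres : MemLp (fun ω => Y ω - mt (X ω) (S ω)) 2 P := A.memLp_Y.sub A.memLp_mt
  have hexp : MemLp (fun ω => mt (X ω) (S ω) - mu (X ω)) 2 P := A.memLp_mt.sub A.memLp_mu
  have hres2 := A.integrable_weight_mul_sq hres
  have hexp2 := A.integrable_weight_mul_sq hexp
  have hsum : Integrable (fun ω => W ω / π (X ω) ^ 2 * (Y ω - mt (X ω) (S ω)) ^ 2
      + W ω / π (X ω) ^ 2 * (mt (X ω) (S ω) - mu (X ω)) ^ 2) P := hres2.add hexp2
  have hcross : Integrable (fun ω => W ω / π (X ω) ^ 2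
      * ((Y ω - mt (X ω) (S ω)) * (mt (X ω) (S ω) - mu (X ω)))) P :=
    A.integrable_weight_mul (hres.integrable_mul hexp)
  calc ∫ ω, W ω / π (X ω) ^ 2 * (Y ω - mu (X ω)) ^ 2 ∂P
      = ∫ ω, (W ω / π (X ω) ^ 2 * (Y ω - mt (X ω) (S ω)) ^ 2
          + W ω / π (X ω) ^ 2 * (mt (X ω) (S ω) - mu (X ω)) ^ 2)
          + 2 * (W ω / π (X ω) ^ 2 * ((Y ω - mt (X ω) (S ω)) * (mt (X ω) (S ω) - mu (X ω))))
          ∂P := by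
        congr 1 with ω
        ring
    _ = _ := by
        rw [integral_add hsum (hcross.const_mul 2), integral_add hres2 hexp2,
          integral_const_mul, A.integral_cross_eq_zero, mul_zero, add_zero]

theorem integral_weight_mul_sq_mt_sub_mu (A : IsTreatmentArm P X W π ε Y S mt mu) :
    ∫ ω, W ω / π (X ω) ^ 2 * (mt (X ω) (S ω) - mu (X ω)) ^ 2 ∂P
      = ∫ ω, 1 / π (X ω) * condVar P (mX X) (fun ω => mt (X ω) (S ω)) ω ∂P := by
  have := A.measurable_mt
  have := A.measurable_mu
  exact (A.integral_weight_mul_eq (h := fun q => (mt q.1 q.2.2 - mu q.1) ^ 2)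
    (by fun_prop)).trans
    (integral_mul_sq_sub_eq_integral_mul_condVar (mX_le A.measurable_X)
      ((measurable_const.div A.measurable_π).comp measurable_mX).stronglyMeasurable
      A.norm_inv_π_le A.memLp_mt A.mu_ae_eq_condExp_mt)

end IsTreatmentArm

theorem integral_sq_ipw_obs {Ω 𝒮 : Type*} [MeasurableSpace Ω] {P : Measure Ω}
    {T a b : Ω → ℝ} (hT01 : ∀ ω, T ω = 0 ∨ T ω = 1) {Y0 Y1 : Ω → ℝ} {S0 S1 : Ω → 𝒮}
    (F1 F0 : Ω → ℝ → 𝒮 → ℝ)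
    (h1 : Integrable (fun ω => T ω / a ω ^ 2 * F1 ω (Y1 ω) (S1 ω) ^ 2) P)
    (h0 : Integrable (fun ω => (1 - T ω) / b ω ^ 2 * F0 ω (Y0 ω) (S0 ω) ^ 2) P) :
    ∫ ω, (T ω / a ω * F1 ω (obs T Y0 Y1 ω) (obs T S0 S1 ω)
        - (1 - T ω) / b ω * F0 ω (obs T Y0 Y1 ω) (obs T S0 S1 ω)) ^ 2 ∂P
      = ∫ ω, T ω / a ω ^ 2 * F1 ω (Y1 ω) (S1 ω) ^ 2 ∂P
        + ∫ ω, (1 - T ω) / b ω ^ 2 * F0 ω (Y0 ω) (S0 ω) ^ 2 ∂P := by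
  rw [← integral_add h1 h0]
  congr 1 with ω
  rcases hT01 ω with hT | hT <;> simp [obs, hT] <;> ring

end Surrogate

theorem statement17_general
    {Ω 𝒳 𝒮 : Type*} [MeasurableSpace Ω] [MeasurableSpace 𝒳] [MeasurableSpace 𝒮]
    (P : Measure Ω) [IsProbabilityMeasure P]
    (X : Ω → 𝒳) (T : Ω → ℝ) (S0 S1 : Ω → 𝒮) (Y0 Y1 : Ω → ℝ)
    (hX : Measurable X) (hT : Measurable T)
    (hS0 : Measurable S0) (hS1 : Measurable S1)
    (hY0 : Measurable Y0) (hY1 : Measurable Y1)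
    (hT01 : ∀ ω, T ω = 0 ∨ T ω = 1)
    -- the treatment propensity e* (note that E[T|σ(X)] = P(T=1|σ(X)))
    (e : 𝒳 → ℝ) (he : Measurable e) (heRange : ∀ x, e x ∈ Set.Icc (0 : ℝ) 1)
    (heSpec : (fun ω => e (X ω)) =ᵐ[P] P[T|mX X])
    -- Assumption 1(i)
    (h1i : ∀ t : ℝ, t = 0 ∨ t = 1 →
      CondIndepBdd P (mX X) (fun ω => (pot Y0 Y1 t ω, pot S0 S1 t ω)) T)
    -- strict overlap for e*
    (ε : ℝ) (hε0 : 0 < ε)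
    (h2e : ∀ᵐ ω ∂P, ε ≤ e (X ω) ∧ e (X ω) ≤ 1 - ε)
    -- the outcome regressions μ̃* and μ*
    (mt : ℝ → 𝒳 → 𝒮 → ℝ) (hmt : Measurable fun p : ℝ × 𝒳 × 𝒮 => mt p.1 p.2.1 p.2.2)
    (hmtSpec : ∀ t : ℝ, t = 0 ∨ t = 1 →
      (fun ω => mt t (X ω) (pot S0 S1 t ω)) =ᵐ[P] P[pot Y0 Y1 t|m2 X (pot S0 S1 t)])
    (mu : ℝ → 𝒳 → ℝ) (hmu : Measurable fun p : ℝ × 𝒳 => mu p.1 p.2)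
    (hmuSpec : ∀ t : ℝ, t = 0 ∨ t = 1 →
      (fun ω => mu t (X ω)) =ᵐ[P] P[pot Y0 Y1 t|mX X])
    -- Y(0), Y(1) ∈ L²(P)
    (hY0L2 : MemLp Y0 2 P) (hY1L2 : MemLp Y1 2 P)
    -- abbreviations (defined by the accompanying equations)
    (p : ℝ)
    (EA2 : ℝ) (hEA2 : EA2 = ∫ ω,
      (T ω / e (X ω) * (obs T Y0 Y1 ω - mt 1 (X ω) (obs T S0 S1 ω))
        - (1 - T ω) / (1 - e (X ω)) * (obs T Y0 Y1 ω - mt 0 (X ω) (obs T S0 S1 ω))) ^ 2 ∂P)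
    (EB2 : ℝ)
    (EC2 : ℝ) (hEC2 : EC2 = ∫ ω,
      (T ω / e (X ω) * (mt 1 (X ω) (obs T S0 S1 ω) - mu 1 (X ω))
        - (1 - T ω) / (1 - e (X ω)) * (mt 0 (X ω) (obs T S0 S1 ω) - mu 0 (X ω))) ^ 2 ∂P)
    (Vi : ℝ) (hVi : Vi = (∫ ω,
        (T ω / e (X ω) * (obs T Y0 Y1 ω - mu 1 (X ω))
          - (1 - T ω) / (1 - e (X ω)) * (obs T Y0 Y1 ω - mu 0 (X ω))) ^ 2 ∂P) + EB2)
    (Vii : ℝ) (hVii : Vii = EA2 + p * EB2 + p * EC2)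
    (Viii : ℝ) (hViii : Viii = EA2)
    (VS : ℝ) (hVS : VS = ∫ ω,
      (1 / e (X ω)) * condVar P (mX X) (fun ω' => mt 1 (X ω') (S1 ω')) ω
        + (1 / (1 - e (X ω))) * condVar P (mX X) (fun ω' => mt 0 (X ω') (S0 ω')) ω ∂P) :
    Vi - Vii = (1 - p) * (VS + EB2) ∧ Vii - Viii = p * (VS + EB2) := by
  have arm1 : IsTreatmentArm P X T e ε Y1 S1 (mt 1) (mu 1) :=
    { measurable_X := hX, measurable_W := hT
      W_mem_Icc := fun ω => by rcases hT01 ω with h | h <;> simp [h]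
      measurable_π := he, π_nonneg := fun x => (heRange x).1, π_ae_eq := heSpec
      ε_pos := hε0, ε_le_π := h2e.mono fun _ h => h.1
      measurable_Y := hY1, measurable_S := hS1, memLp_Y := hY1L2
      condIndep := by simpa using h1i 1 (Or.inr rfl)
      measurable_mt := hmt.comp (measurable_const.prodMk measurable_id)
      mt_ae_eq := by simpa using hmtSpec 1 (Or.inr rfl)
      measurable_mu := hmu.comp (measurable_const.prodMk measurable_id)
      mu_ae_eq := by simpa using hmuSpec 1 (Or.inr rfl) }
  have arm0 : IsTreatmentArm P X (fun ω => 1 - T ω) (fun x => 1 - e x) ε Y0 S0 (mt 0) (mu 0) :=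
    { measurable_X := hX, measurable_W := measurable_const.sub hT
      W_mem_Icc := fun ω => by rcases hT01 ω with h | h <;> simp [h]
      measurable_π := measurable_const.sub he
      π_nonneg := fun x => sub_nonneg.2 (heRange x).2
      π_ae_eq := ae_eq_condExp_one_sub (mX_le hX)
        (integrable_of_forall_mem_Icc hT arm1.W_mem_Icc) heSpec
      ε_pos := hε0, ε_le_π := h2e.mono fun _ h => by linarith [h.2]
      measurable_Y := hY0, measurable_S := hS0, memLp_Y := hY0L2
      condIndep := CondIndepBdd.comp_right (by simpa using h1i 0 (Or.inl rfl))
        (measurable_const.sub measurable_id)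
      measurable_mt := hmt.comp (measurable_const.prodMk measurable_id)
      mt_ae_eq := by simpa using hmtSpec 0 (Or.inl rfl)
      measurable_mu := hmu.comp (measurable_const.prodMk measurable_id)
      mu_ae_eq := by simpa using hmuSpec 0 (Or.inl rfl) }
  have hDsplit := integral_sq_ipw_obs hT01 (S0 := S0) (S1 := S1) (fun ω y _ => y - mu 1 (X ω))
    (fun ω y _ => y - mu 0 (X ω))
    (arm1.integrable_weight_mul_sq (hY1L2.sub arm1.memLp_mu))
    (arm0.integrable_weight_mul_sq (hY0L2.sub arm0.memLp_mu))
  have hAsplit := integral_sq_ipw_obs hT01 (fun ω y s => y - mt 1 (X ω) s)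
    (fun ω y s => y - mt 0 (X ω) s)
    (arm1.integrable_weight_mul_sq (hY1L2.sub arm1.memLp_mt))
    (arm0.integrable_weight_mul_sq (hY0L2.sub arm0.memLp_mt))
  have hCsplit := integral_sq_ipw_obs hT01 (Y0 := Y0) (Y1 := Y1)
    (fun ω _ s => mt 1 (X ω) s - mu 1 (X ω))
    (fun ω _ s => mt 0 (X ω) s - mu 0 (X ω))
    (arm1.integrable_weight_mul_sq (arm1.memLp_mt.sub arm1.memLp_mu))
    (arm0.integrable_weight_mul_sq (arm0.memLp_mt.sub arm0.memLp_mu))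
  have hCVS : EC2 = VS := by
    rw [hEC2, hCsplit, hVS,
      integral_add arm1.integrable_inv_mul_condVar arm0.integrable_inv_mul_condVar,
      ← arm1.integral_weight_mul_sq_mt_sub_mu, ← arm0.integral_weight_mul_sq_mt_sub_mu]
  have hVi_eq : Vi = EA2 + EC2 + EB2 := by
    rw [hVi, hEA2, hEC2, hDsplit, hAsplit, hCsplit, arm1.integral_weight_mul_sq_sub_mu,
      arm0.integral_weight_mul_sq_sub_mu]
    ring
  rw [hVii, hViii, hVi_eq, ← hCVS]
  constructor <;> ring

/-- Efficiency gains under MCAR (Proposition on the MCAR setting):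
`V_i − V_ii = (1−p)·(V_S + E[B²])` and `V_ii − V_iii = p·(V_S + E[B²])`. -/
theorem statement17
    {Ω 𝒳 𝒮 : Type*} [MeasurableSpace Ω] [MeasurableSpace 𝒳] [MeasurableSpace 𝒮]
    [StandardBorelSpace 𝒳] [StandardBorelSpace 𝒮]
    (P : Measure Ω) [IsProbabilityMeasure P]
    (X : Ω → 𝒳) (T : Ω → ℝ) (S0 S1 : Ω → 𝒮) (Y0 Y1 : Ω → ℝ)
    (hX : Measurable X) (hT : Measurable T)
    (hS0 : Measurable S0) (hS1 : Measurable S1)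
    (hY0 : Measurable Y0) (hY1 : Measurable Y1)
    (hT01 : ∀ ω, T ω = 0 ∨ T ω = 1)
    -- the treatment propensity e* (note that E[T|σ(X)] = P(T=1|σ(X)))
    (e : 𝒳 → ℝ) (he : Measurable e) (heRange : ∀ x, e x ∈ Set.Icc (0 : ℝ) 1)
    (heSpec : (fun ω => e (X ω)) =ᵐ[P] P[T|mX X])
    -- Assumption 1(i)
    (h1i : ∀ t : ℝ, t = 0 ∨ t = 1 →
      CondIndepBdd P (mX X) (fun ω => (pot Y0 Y1 t ω, pot S0 S1 t ω)) T)
    -- strict overlap for e*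
    (ε : ℝ) (hε0 : 0 < ε) (hε : ε < 1 / 2)
    (h2e : ∀ᵐ ω ∂P, ε ≤ e (X ω) ∧ e (X ω) ≤ 1 - ε)
    -- the labeling indicator and MCAR assumption
    (R : Ω → ℝ) (hR : Measurable R) (hR01 : ∀ ω, R ω = 0 ∨ R ω = 1)
    (hMCAR : IndepFun R (fun ω => (X ω, T ω, S0 ω, S1 ω, Y0 ω, Y1 ω)) P)
    -- the outcome regressions μ̃* and μ*
    (mt : ℝ → 𝒳 → 𝒮 → ℝ) (hmt : Measurable fun p : ℝ × 𝒳 × 𝒮 => mt p.1 p.2.1 p.2.2)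
    (hmtSpec : ∀ t : ℝ, t = 0 ∨ t = 1 →
      (fun ω => mt t (X ω) (pot S0 S1 t ω)) =ᵐ[P] P[pot Y0 Y1 t|m2 X (pot S0 S1 t)])
    (mu : ℝ → 𝒳 → ℝ) (hmu : Measurable fun p : ℝ × 𝒳 => mu p.1 p.2)
    (hmuSpec : ∀ t : ℝ, t = 0 ∨ t = 1 →
      (fun ω => mu t (X ω)) =ᵐ[P] P[pot Y0 Y1 t|mX X])
    -- Y(0), Y(1) ∈ L²(P)
    (hY0L2 : MemLp Y0 2 P) (hY1L2 : MemLp Y1 2 P)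
    -- abbreviations (defined by the accompanying equations)
    (p : ℝ) (hp : p = (P {ω | R ω = 1}).toReal)
    (δ : ℝ) (hδ : δ = (∫ ω, Y1 ω ∂P) - ∫ ω, Y0 ω ∂P)
    (EA2 : ℝ) (hEA2 : EA2 = ∫ ω,
      (T ω / e (X ω) * (obs T Y0 Y1 ω - mt 1 (X ω) (obs T S0 S1 ω))
        - (1 - T ω) / (1 - e (X ω)) * (obs T Y0 Y1 ω - mt 0 (X ω) (obs T S0 S1 ω))) ^ 2 ∂P)
    (EB2 : ℝ) (hEB2 : EB2 = ∫ ω, (mu 1 (X ω) - mu 0 (X ω) - δ) ^ 2 ∂P)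
    (EC2 : ℝ) (hEC2 : EC2 = ∫ ω,
      (T ω / e (X ω) * (mt 1 (X ω) (obs T S0 S1 ω) - mu 1 (X ω))
        - (1 - T ω) / (1 - e (X ω)) * (mt 0 (X ω) (obs T S0 S1 ω) - mu 0 (X ω))) ^ 2 ∂P)
    (Vi : ℝ) (hVi : Vi = (∫ ω,
        (T ω / e (X ω) * (obs T Y0 Y1 ω - mu 1 (X ω))
          - (1 - T ω) / (1 - e (X ω)) * (obs T Y0 Y1 ω - mu 0 (X ω))) ^ 2 ∂P) + EB2)
    (Vii : ℝ) (hVii : Vii = EA2 + p * EB2 + p * EC2)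
    (Viii : ℝ) (hViii : Viii = EA2)
    (VS : ℝ) (hVS : VS = ∫ ω,
      (1 / e (X ω)) * condVar P (mX X) (fun ω' => mt 1 (X ω') (S1 ω')) ω
        + (1 / (1 - e (X ω))) * condVar P (mX X) (fun ω' => mt 0 (X ω') (S0 ω')) ω ∂P) :
    Vi - Vii = (1 - p) * (VS + EB2) ∧ Vii - Viii = p * (VS + EB2) :=
  statement17_general P X T S0 S1 Y0 Y1 hX hT hS0 hS1 hY0 hY1 hT01 e he heRange heSpec h1i ε hε0 h2e
    mt hmt hmtSpec mu hmu hmuSpec hY0L2 hY1L2 p EA2 hEA2 EB2 EC2 hEC2 Vi hVi Vii hVii Viii hViii VS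
    hVS
end
end
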